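/- arXiv:1101.1479 — 5 statements merged into one kernel-verified Lean document; each statement's English description precedes it below -/
import Mathlib

section
/- Let μ, H, J be as in the context. Then for all a, b ∈ ℝ the current–mass relation ∫₀ᵀ J(a,t) dt − ∫₀ᵀ J(b,t) dt = ∫_a^b (μ(T,x) − μ(0,x)) dx holds; in particular, since 0 ≤ μ ≤ 1, the map x ↦ ∫₀ᵀ J(x,t) dt is Lipschitz with constant 1, i.e. |∫₀ᵀ J(a,t) dt − ∫₀ᵀ J(b,t) dt| ≤ |a − b|. -/
open MeasureTheory Set

/-- the current–mass relation
`∫₀ᵀ J(a,t)dt − ∫₀ᵀ J(b,t)dt = ∫_a^b (μ(T,x) − μ(0,x)) dx`, and the resulting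
Lipschitz bound `|∫₀ᵀ J(a,t)dt − ∫₀ᵀ J(b,t)dt| ≤ |a − b|`. -/
theorem current_mass_relation
    (T δ : ℝ) (hT : 0 < T) (hδ : 0 < δ) (hδ' : δ < 1/2)
    (μ H : ℝ → ℝ → ℝ)
    (hμreg : ContDiffOn ℝ (⊤ : ℕ∞) (fun p : ℝ × ℝ => μ p.1 p.2) (Set.Icc 0 T ×ˢ Set.univ))
    (hμbdd : ∀ t ∈ Set.Icc (0:ℝ) T, ∀ x : ℝ, μ t x ∈ Set.Icc δ (1 - δ))
    (hμder : ∀ k l : ℕ, ∃ C : ℝ, ∀ t ∈ Set.Icc (0:ℝ) T, ∀ x : ℝ,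
      |iteratedDeriv l (fun s => iteratedDeriv k (fun y => μ s y) x) t| ≤ C)
    (hHreg : ContDiff ℝ (⊤ : ℕ∞) (fun p : ℝ × ℝ => H p.1 p.2))
    (hHsupp : HasCompactSupport (fun p : ℝ × ℝ => H p.1 p.2))
    (hpde : ∀ t ∈ Set.Icc (0:ℝ) T, ∀ x : ℝ,
      deriv (fun s => μ s x) t
        = (1/2) * deriv (deriv (μ t)) x
            - deriv (fun y => H t y * (μ t y * (1 - μ t y))) x)
    (J : ℝ → ℝ → ℝ)
    (hJ : ∀ t x : ℝ, J t x = -(1/2) * deriv (μ t) x + H t x * (μ t x * (1 - μ t x))) :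
    ∀ a b : ℝ,
      ((∫ t in Set.Ioc (0:ℝ) T, J t a) - (∫ t in Set.Ioc (0:ℝ) T, J t b)
          = ∫ x in a..b, (μ T x - μ 0 x)) ∧
      |(∫ t in Set.Ioc (0:ℝ) T, J t a) - ∫ t in Set.Ioc (0:ℝ) T, J t b| ≤ |a - b| := by
  set s : Set (ℝ × ℝ) := Set.Icc 0 T ×ˢ Set.univ with hs_def
  have hsU : UniqueDiffOn ℝ s := (uniqueDiffOn_Icc hT).prod uniqueDiffOn_univ
  -- slices of μ in x are smooth
  have factA : ∀ t ∈ Set.Icc (0:ℝ) T, ContDiff ℝ (⊤ : ℕ∞) (fun y => μ t y) := by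
    intro t ht
    rw [← contDiffOn_univ]
    exact hμreg.comp ((contDiff_const.prodMk contDiff_id).contDiffOn)
      (fun y _ => ⟨ht, mem_univ y⟩)
  -- slices of μ in t are continuous
  have factAt : ∀ x : ℝ, ContinuousOn (fun t => μ t x) (Set.Icc 0 T) := by
    intro x
    exact hμreg.continuousOn.comp
      ((continuous_id.prodMk continuous_const).continuousOn)
      (fun t ht => ⟨ht, mem_univ x⟩)
  -- slices of H are smooth
  have factB : ∀ t : ℝ, ContDiff ℝ (⊤ : ℕ∞) (fun y => H t y) :=
    fun t => hHreg.comp (contDiff_const.prodMk contDiff_id)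
  -- joint continuity of (t,x) ↦ deriv (μ t) x on s
  have hderivW : ∀ p ∈ s, HasDerivAt (fun y => μ p.1 y)
      (fderivWithin ℝ (fun p : ℝ × ℝ => μ p.1 p.2) s p (0, 1)) p.2 := by
    intro p hp
    have hdiff : DifferentiableWithinAt ℝ (fun p : ℝ × ℝ => μ p.1 p.2) s p :=
      (hμreg.differentiableOn (by simp)) p hp
    have hfd := hdiff.hasFDerivWithinAt
    have hι : HasDerivAt (fun y : ℝ => (p.1, y)) ((0 : ℝ), (1 : ℝ)) p.2 :=
      (hasDerivAt_const _ _).prodMk (hasDerivAt_id _)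
    have hmaps : Set.MapsTo (fun y : ℝ => (p.1, y)) Set.univ s :=
      fun y _ => ⟨hp.1, mem_univ y⟩
    have := (hfd.comp_hasDerivWithinAt p.2 (hι.hasDerivWithinAt) hmaps)
    rw [hasDerivWithinAt_univ] at this
    exact this
  have hd1cont : ContinuousOn
      (fun p : ℝ × ℝ => deriv (μ p.1) p.2) s := by
    have hDcont : ContinuousOn (fderivWithin ℝ (fun p : ℝ × ℝ => μ p.1 p.2) s) s :=
      hμreg.continuousOn_fderivWithin hsU (by simp)
    have : ContinuousOn (fun p : ℝ × ℝ =>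
        fderivWithin ℝ (fun p : ℝ × ℝ => μ p.1 p.2) s p ((0 : ℝ), (1 : ℝ))) s :=
      hDcont.clm_apply continuousOn_const
    refine this.congr (fun p hp => ?_)
    exact ((hderivW p hp).deriv).symm ▸ rfl
  -- joint continuity of J on s
  have hJcont : ContinuousOn (fun p : ℝ × ℝ => J p.1 p.2) s := by
    have : ContinuousOn (fun p : ℝ × ℝ =>
        -(1/2) * deriv (μ p.1) p.2 + H p.1 p.2 * (μ p.1 p.2 * (1 - μ p.1 p.2))) s := by
      apply ContinuousOn.add
      · exact continuousOn_const.mul hd1cont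
      · exact (hHreg.continuous.continuousOn).mul
          (hμreg.continuousOn.mul (continuousOn_const.sub hμreg.continuousOn))
    exact this.congr (fun p _ => hJ p.1 p.2)
  -- J t is smooth for t ∈ Icc 0 T
  have factC : ∀ t ∈ Set.Icc (0:ℝ) T, ContDiff ℝ (⊤ : ℕ∞) (J t) := by
    intro t ht
    have h1 : ContDiff ℝ (⊤ : ℕ∞) (fun y => μ t y) := (factA t ht).of_le (by simp)
    have h1' : ContDiff ℝ (⊤ : ℕ∞) (deriv (fun y => μ t y)) := (contDiff_infty_iff_deriv.mp h1).2
    have hJt : J t = fun x =>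
        -(1/2) * deriv (μ t) x + H t x * (μ t x * (1 - μ t x)) := funext (hJ t)
    rw [hJt]
    exact (contDiff_const.mul h1').add
      (((factB t).of_le (by simp)).mul (h1.mul (contDiff_const.sub h1)))
  -- derivative of J t in x equals minus time derivative of μ
  have factD : ∀ t ∈ Set.Icc (0:ℝ) T, ∀ x : ℝ,
      deriv (J t) x = -(deriv (fun s => μ s x) t) := by
    intro t ht x
    have h1 : ContDiff ℝ (⊤ : ℕ∞) (fun y => μ t y) := (factA t ht).of_le (by simp)
    have h1' : Differentiable ℝ (deriv (fun y => μ t y)) :=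
      ((contDiff_infty_iff_deriv.mp h1).2).differentiable (by simp)
    have hJt : J t = fun x =>
        -(1/2) * deriv (μ t) x + H t x * (μ t x * (1 - μ t x)) := funext (hJ t)
    have hG : Differentiable ℝ (fun y => H t y * (μ t y * (1 - μ t y))) :=
      (((factB t).of_le (by simp)).mul (h1.mul (contDiff_const.sub h1))).differentiable
        (by simp)
    have hF1 : Differentiable ℝ (fun x => -(1/2) * deriv (μ t) x) :=
      fun x => ((h1' x).const_mul _)
    rw [hJt, deriv_fun_add (hF1 x) (hG x), deriv_const_mul _ (h1' x), hpde t ht x]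
    ring
  -- bound on time derivative
  obtain ⟨C, hC⟩ := hμder 0 1
  have hC' : ∀ t ∈ Set.Icc (0:ℝ) T, ∀ x : ℝ, |deriv (fun s => μ s x) t| ≤ C := by
    intro t ht x
    have := hC t ht x
    simpa [iteratedDeriv_one, iteratedDeriv_zero] using this
  have hC0 : 0 ≤ C := le_trans (abs_nonneg _) (hC' 0 ⟨le_refl 0, hT.le⟩ 0)
  -- FTC in time
  have factH : ∀ x : ℝ,
      ∫ t in Set.Ioc (0:ℝ) T, deriv (fun s => μ s x) t = μ T x - μ 0 x := by
    intro x
    have hint : IntervalIntegrable (fun t => deriv (fun s => μ s x) t) volume 0 T := by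
      rw [intervalIntegrable_iff_integrableOn_Ioc_of_le hT.le]
      apply Integrable.mono' (integrableOn_const (C := C) measure_Ioc_lt_top.ne)
        ((measurable_deriv _).aestronglyMeasurable.restrict)
      filter_upwards [ae_restrict_mem measurableSet_Ioc] with t ht
      rw [Real.norm_eq_abs]
      exact hC' t (Ioc_subset_Icc_self ht) x
    have := intervalIntegral.integral_eq_sub_of_hasDeriv_right_of_le hT.le
      (factAt x) (fun t ht => ?_) hint
    · rw [← intervalIntegral.integral_of_le hT.le]
      exact this
    · have hmem : s ∈ nhds (t, x) := by
        apply Filter.mem_of_superset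
          ((isOpen_Ioo.prod isOpen_univ).mem_nhds ⟨ht, mem_univ x⟩)
        exact Set.prod_mono Ioo_subset_Icc_self (subset_refl _)
      have hdiff : DifferentiableAt ℝ (fun p : ℝ × ℝ => μ p.1 p.2) (t, x) :=
        (hμreg.contDiffAt hmem).differentiableAt (by simp)
      have : DifferentiableAt ℝ (fun s => μ s x) t :=
        hdiff.comp (f := fun s : ℝ => (s, x)) t ((differentiableAt_id).prodMk (differentiableAt_const x))
      exact this.hasDerivAt.hasDerivWithinAt
  -- derivative of F
  set F : ℝ → ℝ := fun x => ∫ t in Set.Ioc (0:ℝ) T, J t x with hF_def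
  have factI : ∀ x₀ : ℝ, HasDerivAt F (-(μ T x₀ - μ 0 x₀)) x₀ := by
    intro x₀
    have key := hasDerivAt_integral_of_dominated_loc_of_deriv_le
      (μ := volume.restrict (Set.Ioc 0 T)) (F := fun x t => J t x)
      (F' := fun x t => deriv (J t) x) (x₀ := x₀) (bound := fun _ => C)
      (s := Metric.ball x₀ 1) (Metric.ball_mem_nhds x₀ one_pos)
      (Filter.Eventually.of_forall (fun x => ?_)) ?_ ?_ ?_ ?_ ?_
    · have heq : (∫ t in Set.Ioc (0:ℝ) T, deriv (J t) x₀)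
          = -(μ T x₀ - μ 0 x₀) := by
        rw [show (fun t => deriv (J t) x₀) = fun t => deriv (J t) x₀ from rfl]
        have : ∫ t in Set.Ioc (0:ℝ) T, deriv (J t) x₀
            = ∫ t in Set.Ioc (0:ℝ) T, -(deriv (fun s => μ s x₀) t) := by
          apply setIntegral_congr_fun measurableSet_Ioc
          intro t ht
          exact factD t (Ioc_subset_Icc_self ht) x₀
        rw [this, integral_neg, factH x₀]
      rw [← heq]
      exact key.2
    -- AEStronglyMeasurable (fun t => J t x)
    · have : ContinuousOn (fun t => J t x) (Set.Icc 0 T) :=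
        hJcont.comp ((continuous_id.prodMk continuous_const).continuousOn)
          (fun t ht => ⟨ht, mem_univ x⟩)
      exact ((this.mono Ioc_subset_Icc_self).aestronglyMeasurable measurableSet_Ioc)
    -- integrable F x₀
    · have : ContinuousOn (fun t => J t x₀) (Set.Icc 0 T) :=
        hJcont.comp ((continuous_id.prodMk continuous_const).continuousOn)
          (fun t ht => ⟨ht, mem_univ x₀⟩)
      exact (this.integrableOn_Icc).mono_set Ioc_subset_Icc_self
    -- AEStronglyMeasurable F'
    · apply AEStronglyMeasurable.congr
        ((measurable_deriv (fun s => μ s x₀)).neg.aestronglyMeasurable.restrict)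
      filter_upwards [ae_restrict_mem measurableSet_Ioc] with t ht
      exact (factD t (Ioc_subset_Icc_self ht) x₀).symm
    -- bound
    · filter_upwards [ae_restrict_mem measurableSet_Ioc] with t ht x _
      rw [Real.norm_eq_abs, factD t (Ioc_subset_Icc_self ht) x, abs_neg]
      exact hC' t (Ioc_subset_Icc_self ht) x
    -- bound integrable
    · exact integrableOn_const measure_Ioc_lt_top.ne
    -- differentiability
    · filter_upwards [ae_restrict_mem measurableSet_Ioc] with t ht x _
      exact (((factC t (Ioc_subset_Icc_self ht)).differentiable (by simp)) x).hasDerivAt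
  -- conclude
  intro a b
  have hcont : Continuous (fun x => μ T x - μ 0 x) :=
    ((factA T ⟨hT.le, le_refl T⟩).continuous).sub
      ((factA 0 ⟨le_refl 0, hT.le⟩).continuous)
  have hFTCx : ∫ x in a..b, -(μ T x - μ 0 x) = F b - F a :=
    intervalIntegral.integral_eq_sub_of_hasDerivAt (fun x _ => factI x)
      (hcont.neg.intervalIntegrable a b)
  rw [intervalIntegral.integral_neg] at hFTCx
  have hmain : F a - F b = ∫ x in a..b, (μ T x - μ 0 x) := by linarith
  refine ⟨hmain, ?_⟩
  rw [hmain]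
  have hb : ∀ x ∈ Set.uIoc a b, ‖μ T x - μ 0 x‖ ≤ 1 := by
    intro x _
    have h1 := hμbdd T ⟨hT.le, le_refl T⟩ x
    have h0 := hμbdd 0 ⟨le_refl 0, hT.le⟩ x
    rw [Real.norm_eq_abs, abs_le]
    constructor <;> [skip; skip] <;>
      · obtain ⟨h1a, h1b⟩ := h1; obtain ⟨h0a, h0b⟩ := h0
        first | linarith | linarith
  calc |∫ x in a..b, (μ T x - μ 0 x)| ≤ 1 * |b - a| :=
        intervalIntegral.norm_integral_le_of_norm_le_const hb
    _ = |a - b| := by rw [one_mul, abs_sub_comm]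
end

section
/- Let μ, H be as in the context, let γ̂ be the given smooth profile, and assume h(μ(0,·);γ̂) < ∞. Then μ converges to γ̂ at spatial infinity, uniformly in time: lim_{|y|→∞} sup_{t∈[0,T]} |μ(t,y) − γ̂(y)| = 0. -/
open MeasureTheory Set

/-- Relative entropy density `h_d(α;β)` with the convention `0 log 0 = 0`. -/
noncomputable def hd (a b : ℝ) : ℝ :=
  a * Real.log (a / b) + (1 - a) * Real.log ((1 - a) / (1 - b))

open Filter Topology

lemma hd_ge (a b : ℝ) (ha : 0 < a) (ha' : a < 1) (hb : 0 < b) (hb' : b < 1) :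
    a - b + (b - a) ≤ hd a b := by
  have h1 : Real.log (b / a) ≤ b / a - 1 := Real.log_le_sub_one_of_pos (div_pos (by linarith) (by linarith))
  have h2 : Real.log ((1 - b) / (1 - a)) ≤ (1 - b) / (1 - a) - 1 :=
    Real.log_le_sub_one_of_pos (div_pos (by linarith) (by linarith))
  have e1 : Real.log (a / b) = - Real.log (b / a) := by
    rw [← Real.log_inv]; congr 1; field_simp
  have e2 : Real.log ((1 - a) / (1 - b)) = - Real.log ((1 - b) / (1 - a)) := by
    rw [← Real.log_inv]; congr 1; field_simp
  have k1 : a - b ≤ a * Real.log (a / b) := by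
    rw [e1]
    have := mul_le_mul_of_nonneg_left h1 ha.le
    have hh : a * (b / a - 1) = b - a := by field_simp
    nlinarith
  have k2 : b - a ≤ (1 - a) * Real.log ((1 - a) / (1 - b)) := by
    rw [e2]
    have h1a : (0:ℝ) < 1 - a := by linarith
    have := mul_le_mul_of_nonneg_left h2 h1a.le
    have hh : (1 - a) * ((1 - b) / (1 - a) - 1) = a - b := by field_simp; ring
    nlinarith
  unfold hd; linarith

lemma hd_nonneg (a b : ℝ) (ha : 0 < a) (ha' : a < 1) (hb : 0 < b) (hb' : b < 1) :
    0 ≤ hd a b := by have := hd_ge a b ha ha' hb hb'; linarith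

lemma hd_pos (a b : ℝ) (ha : 0 < a) (ha' : a < 1) (hb : 0 < b) (hb' : b < 1)
    (hab : a ≠ b) : 0 < hd a b := by
  have h1 : Real.log (b / a) < b / a - 1 := by
    apply Real.log_lt_sub_one_of_pos (div_pos (by linarith) (by linarith))
    intro h
    apply hab
    field_simp at h
    linarith
  have e1 : Real.log (a / b) = - Real.log (b / a) := by
    rw [← Real.log_inv]; congr 1; field_simp
  have k1 : a - b < a * Real.log (a / b) := by
    rw [e1]
    have := mul_lt_mul_of_pos_left h1 ha
    have hh : a * (b / a - 1) = b - a := by field_simp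
    nlinarith
  have h2 : Real.log ((1 - b) / (1 - a)) ≤ (1 - b) / (1 - a) - 1 :=
    Real.log_le_sub_one_of_pos (div_pos (by linarith) (by linarith))
  have e2 : Real.log ((1 - a) / (1 - b)) = - Real.log ((1 - b) / (1 - a)) := by
    rw [← Real.log_inv]; congr 1; field_simp
  have k2 : b - a ≤ (1 - a) * Real.log ((1 - a) / (1 - b)) := by
    rw [e2]
    have h1a : (0:ℝ) < 1 - a := by linarith
    have := mul_le_mul_of_nonneg_left h2 h1a.le
    have hh : (1 - a) * ((1 - b) / (1 - a) - 1) = a - b := by field_simp; ring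
    nlinarith
  unfold hd; linarith

lemma deriv_nonneg_of_isMaxOn_Icc {f : ℝ → ℝ} {d a b t : ℝ}
    (hf : HasDerivAt f d t) (hat : a < t) (htb : t ≤ b)
    (hmax : ∀ s ∈ Icc a b, f s ≤ f t) : 0 ≤ d := by
  have h1 : Tendsto (slope f t) (𝓝[<] t) (𝓝 d) := by
    have := (hf.hasDerivWithinAt (s := Iio t))
    rw [hasDerivWithinAt_iff_tendsto_slope' (by simp)] at this
    exact this
  have h2 : ∀ᶠ s in 𝓝[<] t, 0 ≤ slope f t s := by
    filter_upwards [Ioo_mem_nhdsLT hat] with s hs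
    rw [slope_def_field]
    have hnum : f s - f t ≤ 0 := by
      have := hmax s ⟨hs.1.le, hs.2.le.trans htb⟩; linarith
    have hden : s - t < 0 := by linarith [hs.2]
    exact div_nonneg_iff.mpr (Or.inr ⟨hnum, hden.le⟩)
  exact ge_of_tendsto h1 h2

lemma deriv2_nonpos_of_isLocalMax {f : ℝ → ℝ} {x : ℝ}
    (hf : Differentiable ℝ f) (hf' : Differentiable ℝ (deriv f))
    (h : IsLocalMax f x) : deriv (deriv f) x ≤ 0 := by
  by_contra hpos
  push_neg at hpos
  have h0 : deriv f x = 0 := h.deriv_eq_zero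
  have hs : Tendsto (slope (deriv f) x) (𝓝[≠] x) (𝓝 (deriv (deriv f) x)) :=
    hasDerivAt_iff_tendsto_slope.mp (hf' x).hasDerivAt
  have h3 : ∀ᶠ y in 𝓝[≠] x, 0 < slope (deriv f) x y :=
    hs.eventually (eventually_gt_nhds hpos)
  have h4 : ∀ᶠ y in 𝓝[>] x, 0 < deriv f y := by
    have h5 : ∀ᶠ y in 𝓝[>] x, 0 < slope (deriv f) x y :=
      h3.filter_mono (nhdsWithin_mono x (by intro y hy; exact ne_of_gt hy))
    filter_upwards [h5, self_mem_nhdsWithin] with y hy hy'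
    rw [slope_def_field, h0, sub_zero] at hy
    have hyx : 0 < y - x := by simp only [mem_Ioi] at hy'; linarith
    have := mul_pos hy hyx
    rwa [div_mul_cancel₀] at this
    linarith
  have h6 : ∀ᶠ y in 𝓝[>] x, f y ≤ f x := h.filter_mono nhdsWithin_le_nhds
  obtain ⟨u, hu, hsub⟩ := mem_nhdsGT_iff_exists_Ioo_subset.mp (h4.and h6)
  rw [mem_Ioi] at hu
  set z := (x + u) / 2 with hz
  have hxz : x < z := by simp [hz]; linarith
  have hzu : z < u := by simp [hz]; linarith
  have hmono : StrictMonoOn f (Icc x z) := by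
    apply strictMonoOn_of_deriv_pos (convex_Icc x z) (hf.continuous.continuousOn)
    intro y hy
    rw [interior_Icc] at hy
    exact (hsub ⟨hy.1, hy.2.trans hzu⟩).1
  have hlt : f x < f z := hmono ⟨le_refl x, hxz.le⟩ ⟨hxz.le, le_refl z⟩ hxz
  have hle : f z ≤ f x := (hsub ⟨hxz, hzu⟩).2
  linarith

lemma maxprin_eta {T : ℝ} (hT : 0 < T) {u : ℝ → ℝ → ℝ} {R1 ε1 : ℝ} (hε1 : 0 ≤ ε1)
    (H1 : ContinuousOn (fun p : ℝ × ℝ => u p.1 p.2) (Icc 0 T ×ˢ univ))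
    (H2 : ∀ t ∈ Icc (0:ℝ) T, Differentiable ℝ (u t) ∧ Differentiable ℝ (deriv (u t)))
    (H3 : ∀ t ∈ Ioo (0:ℝ) T, ∀ x, R1 ≤ x →
      HasDerivAt (fun s => u s x) ((1/2) * deriv (deriv (u t)) x) t)
    (H4 : ∀ t ∈ Icc (0:ℝ) T, ∀ x : ℝ, |u t x| ≤ 1)
    (H5 : ∀ x, R1 ≤ x → |u 0 x| ≤ ε1)
    {η T' : ℝ} (hη : 0 < η) (hT'0 : 0 < T') (hT'T : T' < T) :
    ∀ t ∈ Icc (0:ℝ) T', ∀ x, R1 ≤ x →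
      u t x ≤ ε1 + 3 * Real.exp (t/2) * Real.exp (R1 - x) + η * ((x - R1)^2 + 2*t) := by
  set Ψ : ℝ → ℝ → ℝ := fun t x =>
    u t x - (ε1 + 3 * Real.exp (t/2) * Real.exp (R1 - x) + η * ((x - R1)^2 + 2*t)) with hΨ
  intro t ht x hx
  by_contra hcon
  push_neg at hcon
  have hΨpos0 : 0 < Ψ t x := by simp only [hΨ]; linarith
  -- the box
  obtain ⟨X, hxX, hR1X, hbig⟩ :
      ∃ X, x ≤ X ∧ R1 < X ∧ ∀ y : ℝ, X ≤ y → 1 < η * (y - R1)^2 := by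
    refine ⟨max x R1 + Real.sqrt (1/η) + 1, ?_, ?_, ?_⟩
    · have h1 : x ≤ max x R1 := le_max_left _ _
      have h2 : (0:ℝ) ≤ Real.sqrt (1/η) := Real.sqrt_nonneg _
      linarith
    · have h1 : R1 ≤ max x R1 := le_max_right _ _
      have h2 : (0:ℝ) ≤ Real.sqrt (1/η) := Real.sqrt_nonneg _
      linarith
    · intro y hy
      have h1 : R1 ≤ max x R1 := le_max_right _ _
      have h2 : Real.sqrt (1/η) + 1 ≤ y - R1 := by linarith
      have h3 : Real.sqrt (1/η) ^ 2 < (y - R1)^2 := by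
        apply sq_lt_sq' <;> nlinarith [Real.sqrt_nonneg (1/η)]
      rw [Real.sq_sqrt (by positivity)] at h3
      calc 1 = η * (1/η) := by field_simp
      _ < η * (y - R1)^2 := (mul_lt_mul_iff_right₀ hη).mpr h3
  -- compactness
  set K : Set (ℝ × ℝ) := Icc 0 T' ×ˢ Icc R1 X with hK
  have hKsub : K ⊆ Icc 0 T ×ˢ univ := fun p hp =>
    ⟨⟨hp.1.1, hp.1.2.trans hT'T.le⟩, mem_univ _⟩
  have hKc : IsCompact K := isCompact_Icc.prod isCompact_Icc
  have htx : ((t, x) : ℝ × ℝ) ∈ K := ⟨ht, hx, hxX⟩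
  have hΨcont : ContinuousOn (fun p : ℝ × ℝ => Ψ p.1 p.2) K := by
    apply ContinuousOn.sub (H1.mono hKsub)
    fun_prop
  obtain ⟨⟨ts, xx⟩, hmemK, hmaxK⟩ := hKc.exists_isMaxOn ⟨(t, x), htx⟩ hΨcont
  have hmax' : ∀ p ∈ K, Ψ p.1 p.2 ≤ Ψ ts xx := fun p hp => hmaxK hp
  have hΨpos : 0 < Ψ ts xx := lt_of_lt_of_le hΨpos0 (hmax' (t, x) htx)
  have hts : ts ∈ Icc (0:ℝ) T' := hmemK.1
  have hxx : xx ∈ Icc R1 X := hmemK.2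
  have htsT : ts ∈ Icc (0:ℝ) T := ⟨hts.1, hts.2.trans hT'T.le⟩
  have hexp1 : (0:ℝ) < Real.exp (ts/2) := Real.exp_pos _
  have hexp2 : (0:ℝ) < Real.exp (R1 - xx) := Real.exp_pos _
  have h3ee : (0:ℝ) < 3 * Real.exp (ts/2) * Real.exp (R1 - xx) := by positivity
  -- ts > 0
  have hts0 : 0 < ts := by
    rcases lt_or_eq_of_le hts.1 with h | h
    · exact h
    · exfalso
      have h5 := (abs_le.mp (H5 xx hxx.1)).2
      have hkey : 0 < Ψ 0 xx := by rw [← h] at hΨpos; exact hΨpos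
      have he0 : Real.exp ((0:ℝ)/2) = 1 := by norm_num
      simp only [hΨ, he0] at hkey
      nlinarith [Real.exp_pos (R1 - xx), sq_nonneg (xx - R1)]
  -- xx < X
  have hxxX : xx < X := by
    rcases lt_or_eq_of_le hxx.2 with h | h
    · exact h
    · exfalso
      have h4 := (abs_le.mp (H4 ts htsT xx)).2
      have hb := hbig xx h.ge
      simp only [hΨ] at hΨpos
      nlinarith [mul_pos hη hts0]
  -- xx > R1
  have hxxR1 : R1 < xx := by
    rcases lt_or_eq_of_le hxx.1 with h | h
    · exact h
    · exfalso
      have h4 := (abs_le.mp (H4 ts htsT xx)).2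
      have he : (1:ℝ) ≤ Real.exp (ts/2) := Real.one_le_exp (by linarith)
      have he2 : Real.exp (R1 - xx) = 1 := by rw [← h]; simp
      simp only [hΨ] at hΨpos
      rw [he2] at hΨpos
      nlinarith [mul_pos hη hts0, sq_nonneg (xx - R1)]
  -- differentiability of the slice
  have hdiff := H2 ts htsT
  -- time derivative
  have hut : HasDerivAt (fun s => u s xx) ((1/2) * deriv (deriv (u ts)) xx) ts :=
    H3 ts ⟨hts0, lt_of_le_of_lt hts.2 hT'T⟩ xx hxxR1.le
  have e2t : HasDerivAt (fun s : ℝ => 3 * Real.exp (s/2) * Real.exp (R1 - xx))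
      (3 * (Real.exp (ts/2) * (1/2)) * Real.exp (R1 - xx)) ts := by
    exact ((((hasDerivAt_id ts).div_const 2).exp).const_mul 3).mul_const (Real.exp (R1 - xx))
  have e3t : HasDerivAt (fun s : ℝ => η * ((xx - R1)^2 + 2*s)) (η * (2*1)) ts :=
    (((hasDerivAt_id ts).const_mul 2).const_add ((xx - R1)^2)).const_mul η
  have hΨt : HasDerivAt (fun s => Ψ s xx)
      ((1/2) * deriv (deriv (u ts)) xx
        - (0 + 3 * (Real.exp (ts/2) * (1/2)) * Real.exp (R1 - xx) + η * (2*1))) ts := by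
    exact hut.sub (((hasDerivAt_const ts ε1).add e2t).add e3t)
  have htderiv : 0 ≤ (1/2) * deriv (deriv (u ts)) xx
      - (0 + 3 * (Real.exp (ts/2) * (1/2)) * Real.exp (R1 - xx) + η * (2*1)) := by
    apply deriv_nonneg_of_isMaxOn_Icc hΨt hts0 hts.2
    intro s hs
    exact hmax' (s, xx) ⟨hs, hxx⟩
  -- space derivative
  have hbarx : ∀ y : ℝ, HasDerivAt
      (fun z => ε1 + 3 * Real.exp (ts/2) * Real.exp (R1 - z) + η * ((z - R1)^2 + 2*ts))
      (0 + 3 * Real.exp (ts/2) * (Real.exp (R1 - y) * (0 - 1))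
        + η * (2 * (y - R1)^1 * (1 - 0) + 0)) y := by
    intro y
    have e1 : HasDerivAt (fun z : ℝ => R1 - z) (0 - 1 : ℝ) y :=
      (hasDerivAt_const y R1).sub (hasDerivAt_id y)
    have e2 : HasDerivAt (fun z : ℝ => 3 * Real.exp (ts/2) * Real.exp (R1 - z))
        (3 * Real.exp (ts/2) * (Real.exp (R1 - y) * (0 - 1))) y :=
      e1.exp.const_mul (3 * Real.exp (ts/2))
    have e0 : HasDerivAt (fun z : ℝ => z - R1) ((1:ℝ) - 0) y :=
      (hasDerivAt_id y).sub (hasDerivAt_const y R1)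
    have e3 : HasDerivAt (fun z : ℝ => η * ((z - R1)^2 + 2*ts))
        (η * (2 * (y - R1)^1 * (1 - 0) + 0)) y :=
      (((e0.pow 2)).add (hasDerivAt_const y (2*ts))).const_mul η
    exact ((hasDerivAt_const y ε1).add e2).add e3
  have hφd : ∀ y : ℝ, HasDerivAt (fun z => Ψ ts z)
      (deriv (u ts) y - (0 + 3 * Real.exp (ts/2) * (Real.exp (R1 - y) * (0 - 1))
        + η * (2 * (y - R1)^1 * (1 - 0) + 0))) y :=
    fun y => ((hdiff.1 y).hasDerivAt).sub (hbarx y)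
  set d1 : ℝ → ℝ := fun y =>
    deriv (u ts) y - (0 + 3 * Real.exp (ts/2) * (Real.exp (R1 - y) * (0 - 1))
      + η * (2 * (y - R1)^1 * (1 - 0) + 0)) with hd1
  have hφderiv : deriv (fun z => Ψ ts z) = d1 := funext fun y => (hφd y).deriv
  have hd1d : ∀ y : ℝ, HasDerivAt d1
      (deriv (deriv (u ts)) y - (0 + 3 * Real.exp (ts/2) * ((Real.exp (R1 - y) * (0-1)) * (0 - 1))
        + η * 2)) y := by
    intro y
    have h1 : HasDerivAt (deriv (u ts)) (deriv (deriv (u ts)) y) y :=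
      (hdiff.2 y).hasDerivAt
    have e1 : HasDerivAt (fun z : ℝ => R1 - z) (0 - 1 : ℝ) y :=
      (hasDerivAt_const y R1).sub (hasDerivAt_id y)
    have e2 : HasDerivAt (fun z : ℝ => Real.exp (R1 - z) * (0 - 1))
        ((Real.exp (R1 - y) * (0-1)) * (0 - 1)) y := e1.exp.mul_const _
    have e2' : HasDerivAt (fun z : ℝ => 3 * Real.exp (ts/2) * (Real.exp (R1 - z) * (0 - 1)))
        (3 * Real.exp (ts/2) * ((Real.exp (R1 - y) * (0-1)) * (0 - 1))) y :=
      e2.const_mul _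
    have e0 : HasDerivAt (fun z : ℝ => z - R1) ((1:ℝ) - 0) y :=
      (hasDerivAt_id y).sub (hasDerivAt_const y R1)
    have e3 := ((e0.pow 1).const_mul (2:ℝ)).mul_const ((1:ℝ) - 0)
    have e3' := (e3.add_const (0:ℝ)).const_mul η
    have := h1.sub (((hasDerivAt_const y (0:ℝ)).add e2').add e3')
    refine (this.congr_of_eventuallyEq (Filter.Eventually.of_forall fun z => ?_)).congr_deriv ?_
    · simp [hd1]
    · norm_num
  have hsecond : deriv (deriv (fun z => Ψ ts z)) xx ≤ 0 := by
    apply deriv2_nonpos_of_isLocalMax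
    · exact fun y => (hφd y).differentiableAt
    · rw [hφderiv]; exact fun y => (hd1d y).differentiableAt
    · have hmOn : IsMaxOn (fun z => Ψ ts z) (Icc R1 X) xx := fun y hy =>
        hmax' (ts, y) ⟨hts, hy⟩
      exact hmOn.isLocalMax (Icc_mem_nhds hxxR1 hxxX)
  have hs2 : deriv (deriv (fun z => Ψ ts z)) xx
      = deriv (deriv (u ts)) xx - (0 + 3 * Real.exp (ts/2) * ((Real.exp (R1 - xx) * (0-1)) * (0 - 1))
        + η * 2) := by
    rw [hφderiv]; exact (hd1d xx).deriv
  rw [hs2] at hsecond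
  nlinarith [htderiv, hsecond, h3ee]

lemma maxprin {T : ℝ} (hT : 0 < T) {u : ℝ → ℝ → ℝ} {R1 ε1 : ℝ} (hε1 : 0 ≤ ε1)
    (H1 : ContinuousOn (fun p : ℝ × ℝ => u p.1 p.2) (Icc 0 T ×ˢ univ))
    (H2 : ∀ t ∈ Icc (0:ℝ) T, Differentiable ℝ (u t) ∧ Differentiable ℝ (deriv (u t)))
    (H3 : ∀ t ∈ Ioo (0:ℝ) T, ∀ x, R1 ≤ x →
      HasDerivAt (fun s => u s x) ((1/2) * deriv (deriv (u t)) x) t)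
    (H4 : ∀ t ∈ Icc (0:ℝ) T, ∀ x : ℝ, |u t x| ≤ 1)
    (H5 : ∀ x, R1 ≤ x → |u 0 x| ≤ ε1) :
    ∀ t ∈ Icc (0:ℝ) T, ∀ x, R1 ≤ x →
      u t x ≤ ε1 + 3 * Real.exp (T/2) * Real.exp (R1 - x) := by
  -- first for t < T
  have key : ∀ t ∈ Icc (0:ℝ) T, t < T → ∀ x, R1 ≤ x →
      u t x ≤ ε1 + 3 * Real.exp (t/2) * Real.exp (R1 - x) := by
    intro t ht htT x hx
    have hlim : ∀ η : ℝ, 0 < η →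
        u t x ≤ ε1 + 3 * Real.exp (t/2) * Real.exp (R1 - x) + η * ((x - R1)^2 + 2*t) := by
      intro η hη
      have hT' : 0 < (t + T)/2 := by have := ht.1; linarith
      have hT'T : (t + T)/2 < T := by linarith
      exact maxprin_eta hT hε1 H1 H2 H3 H4 H5 hη hT' hT'T t ⟨ht.1, by linarith⟩ x hx
    by_contra hcon
    push_neg at hcon
    set c := (x - R1)^2 + 2*t with hc
    have hc0 : 0 ≤ c := by
      have := ht.1
      positivity
    set η0 := (u t x - (ε1 + 3 * Real.exp (t/2) * Real.exp (R1 - x))) / (c + 1) with hη0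
    have hη0pos : 0 < η0 := by
      apply div_pos (by linarith) (by linarith)
    have := hlim η0 hη0pos
    rw [hη0] at this
    have hlt : η0 * c < u t x - (ε1 + 3 * Real.exp (t/2) * Real.exp (R1 - x)) := by
      rw [hη0]
      rw [div_mul_eq_mul_div, div_lt_iff₀ (by linarith)]
      nlinarith
    rw [hη0] at hlt
    nlinarith [this, hlt]
  intro t ht x hx
  rcases lt_or_eq_of_le ht.2 with h | h
  · have := key t ht h x hx
    have hmono : Real.exp (t/2) ≤ Real.exp (T/2) := Real.exp_le_exp.mpr (by linarith [ht.2])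
    nlinarith [Real.exp_pos (R1 - x)]
  · -- t = T : limit from the left
    subst h
    have hcont : ContinuousWithinAt (fun s => u s x) (Ioo 0 t) t := by
      have h1 : ContinuousWithinAt (fun p : ℝ × ℝ => u p.1 p.2) (Icc 0 t ×ˢ univ) (t, x) :=
        H1 (t, x) ⟨⟨ht.1, le_refl t⟩, mem_univ _⟩
      have h2 : Tendsto (fun s => ((s, x) : ℝ × ℝ)) (𝓝[Ioo 0 t] t) (𝓝[Icc 0 t ×ˢ univ] (t, x)) := by
        apply tendsto_nhdsWithin_of_tendsto_nhds_of_eventually_within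
        · exact ((continuous_id.prodMk continuous_const).tendsto t).mono_left nhdsWithin_le_nhds
        · filter_upwards [self_mem_nhdsWithin] with s hs
          exact ⟨⟨hs.1.le, hs.2.le⟩, mem_univ _⟩
      exact h1.tendsto.comp h2
    have hne : (𝓝[Ioo 0 t] t).NeBot := by
      rw [nhdsWithin_Ioo_eq_nhdsLT hT]
      infer_instance
    apply le_of_tendsto hcont.tendsto
    filter_upwards [self_mem_nhdsWithin] with s hs
    have := key s ⟨hs.1.le, hs.2.le⟩ hs.2 x hx
    have hmono : Real.exp (s/2) ≤ Real.exp (t/2) := Real.exp_le_exp.mpr (by linarith [hs.2])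
    nlinarith [Real.exp_pos (R1 - x)]

lemma stepA {g γ : ℝ → ℝ} {δ m M L : ℝ} (hδ : 0 < δ) (hδ1 : δ < 1/2)
    (hm : 0 < m) (hM : M < 1) (hL : 0 ≤ L)
    (hg : ∀ x : ℝ, g x ∈ Icc δ (1 - δ)) (hγb : ∀ x : ℝ, γ x ∈ Icc m M)
    (hLip : ∀ x y : ℝ, |(g x - γ x) - (g y - γ y)| ≤ L * |x - y|)
    (hfin : Integrable (fun x : ℝ => hd (g x) (γ x))) :
    ∀ ε0 : ℝ, 0 < ε0 → ∃ R : ℝ, 0 ≤ R ∧ ∀ x : ℝ, R ≤ |x| → |g x - γ x| < ε0 := by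
  intro ε0 hε0
  set F : ℝ → ℝ := fun x => hd (g x) (γ x) with hF
  have hFnn : ∀ x, 0 ≤ F x := by
    intro x
    rcases eq_or_ne (g x) (γ x) with h | h
    · have h3 : γ x ≠ 0 := ne_of_gt (lt_of_lt_of_le hm (hγb x).1)
      have h4 : (1:ℝ) - γ x ≠ 0 :=
        ne_of_gt (by linarith [(hγb x).2] : (0:ℝ) < 1 - γ x)
      simp only [hF, hd, h, div_self h3, div_self h4, Real.log_one, mul_zero, add_zero, le_refl]
    · exact (hd_pos _ _ (lt_of_lt_of_le hδ (hg x).1) (by linarith [(hg x).2])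
        (lt_of_lt_of_le hm (hγb x).1) (lt_of_le_of_lt (hγb x).2 hM) h).le
  set S : Set (ℝ × ℝ) := (Icc δ (1 - δ) ×ˢ Icc m M) ∩ {p : ℝ × ℝ | ε0/2 ≤ |p.1 - p.2|} with hS
  by_cases hSne : S.Nonempty
  · -- compact minimum
    have hScomp : IsCompact S := by
      apply (isCompact_Icc.prod isCompact_Icc).inter_right
      exact isClosed_le continuous_const ((continuous_fst.sub continuous_snd).abs)
    have hhdcont : ContinuousOn (fun p : ℝ × ℝ => hd p.1 p.2) S := by
      intro p hp
      obtain ⟨⟨hp1, hp2⟩, _⟩ := hp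
      have h1 : (0:ℝ) < p.1 := lt_of_lt_of_le hδ hp1.1
      have h2 : p.1 < 1 := by have := hp2; linarith [hp1.2]
      have h3 : (0:ℝ) < p.2 := lt_of_lt_of_le hm hp2.1
      have h4 : p.2 < 1 := lt_of_le_of_lt hp2.2 hM
      apply ContinuousAt.continuousWithinAt
      have c1 : ContinuousAt (fun p : ℝ × ℝ => Real.log (p.1 / p.2)) p :=
        (continuousAt_fst.div continuousAt_snd (ne_of_gt h3)).log
          (ne_of_gt (div_pos h1 h3))
      have c2 : ContinuousAt (fun p : ℝ × ℝ => Real.log ((1 - p.1) / (1 - p.2))) p :=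
        ((continuousAt_const.sub continuousAt_fst).div
            (continuousAt_const.sub continuousAt_snd) (ne_of_gt (by linarith : (0:ℝ) < 1 - p.2))).log
          (ne_of_gt (div_pos (by change (0:ℝ) < 1 - p.1; linarith) (by change (0:ℝ) < 1 - p.2; linarith)))
      exact (continuousAt_fst.mul c1).add ((continuousAt_const.sub continuousAt_fst).mul c2)
    obtain ⟨p0, hp0S, hp0min⟩ := hScomp.exists_isMinOn hSne hhdcont
    set φ : ℝ := hd p0.1 p0.2 with hφ
    have hφpos : 0 < φ := by
      obtain ⟨⟨hp1, hp2⟩, hpd⟩ := hp0S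
      apply hd_pos _ _ (lt_of_lt_of_le hδ hp1.1) (by linarith [hp1.2, hp2.1])
        (lt_of_lt_of_le hm hp2.1) (lt_of_le_of_lt hp2.2 hM)
      intro h
      simp only [mem_setOf_eq] at hpd
      rw [h, sub_self, abs_zero] at hpd
      linarith
    set ℓ : ℝ := min 1 (ε0 / (2 * (L + 1))) with hℓ
    have hℓpos : 0 < ℓ := lt_min one_pos (by positivity)
    have hℓ1 : ℓ ≤ 1 := min_le_left _ _
    -- tail bound
    have htend : Tendsto (fun n : ℕ => ∫ x in (-(n:ℝ))..(n:ℝ), F x) atTop (𝓝 (∫ x, F x)) :=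
      intervalIntegral_tendsto_integral hfin
        (tendsto_neg_atBot_iff.mpr tendsto_natCast_atTop_atTop) tendsto_natCast_atTop_atTop
    have hev : ∀ᶠ n : ℕ in atTop, (∫ x, F x) - ℓ * φ < ∫ x in (-(n:ℝ))..(n:ℝ), F x :=
      htend.eventually (lt_mem_nhds (by nlinarith [hℓpos, hφpos]))
    obtain ⟨N, hN⟩ := hev.exists
    have hIoc : ∫ x in (-(N:ℝ))..(N:ℝ), F x = ∫ x in Ioc (-(N:ℝ)) (N:ℝ), F x :=
      intervalIntegral.integral_of_le
        (by have := Nat.cast_nonneg (α := ℝ) N; linarith)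
    have htailR : ∫ x in Ioi (N:ℝ), F x < ℓ * φ := by
      have hdisj : Disjoint (Ioc (-(N:ℝ)) (N:ℝ)) (Ioi (N:ℝ)) := Ioc_disjoint_Ioi le_rfl
      have hunion := setIntegral_union hdisj measurableSet_Ioi
        (hfin.integrableOn (s := Ioc (-(N:ℝ)) (N:ℝ))) (hfin.integrableOn (s := Ioi (N:ℝ)))
      have hle : ∫ x in (Ioc (-(N:ℝ)) (N:ℝ) ∪ Ioi (N:ℝ)), F x ≤ ∫ x, F x :=
        setIntegral_le_integral hfin (Eventually.of_forall hFnn)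
      rw [hunion] at hle
      rw [hIoc] at hN
      linarith
    have htailL : ∫ x in Iio (-(N:ℝ)), F x < ℓ * φ := by
      have hdisj : Disjoint (Iio (-(N:ℝ))) (Ioc (-(N:ℝ)) (N:ℝ)) := by
        apply Set.disjoint_left.mpr
        intro a ha ha'
        exact absurd ha'.1 (not_lt.mpr ha.le)
      have hunion := setIntegral_union hdisj measurableSet_Ioc
        (hfin.integrableOn (s := Iio (-(N:ℝ)))) (hfin.integrableOn (s := Ioc (-(N:ℝ)) (N:ℝ)))
      have hle : ∫ x in (Iio (-(N:ℝ)) ∪ Ioc (-(N:ℝ)) (N:ℝ)), F x ≤ ∫ x, F x :=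
        setIntegral_le_integral hfin (Eventually.of_forall hFnn)
      rw [hunion] at hle
      rw [hIoc] at hN
      linarith
    refine ⟨(N:ℝ) + 2, by positivity, ?_⟩
    intro x hx
    by_contra hcon
    push_neg at hcon
    -- |g x - γ x| ≥ ε0 at some far point: derive contradiction
    have hlow : ∀ y : ℝ, |x - y| ≤ ℓ → ε0/2 ≤ |g y - γ y| := by
      intro y hy
      have h1 := hLip x y
      have h2 : L * |x - y| ≤ L * ℓ := mul_le_mul_of_nonneg_left hy hL
      have h3 : L * ℓ ≤ ε0/2 := by
        have : ℓ ≤ ε0 / (2 * (L + 1)) := min_le_right _ _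
        have h4 : L * ℓ ≤ L * (ε0 / (2 * (L + 1))) := mul_le_mul_of_nonneg_left this hL
        have h5 : L * (ε0 / (2 * (L + 1))) ≤ ε0/2 := by
          rw [mul_div_assoc']
          rw [div_le_div_iff₀ (by positivity) (by norm_num)]
          nlinarith
        linarith
      have := abs_sub_abs_le_abs_sub (g x - γ x) (g y - γ y)
      linarith
    have hφle : ∀ y : ℝ, |x - y| ≤ ℓ → φ ≤ F y := by
      intro y hy
      exact hp0min (a := (g y, γ y)) ⟨⟨hg y, hγb y⟩, hlow y hy⟩
    -- the interval near x
    rcases abs_cases x with ⟨hxx, _⟩ | ⟨hxx, _⟩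
    · -- x ≥ 0, so x ≥ N + 2
      have hxN : (N:ℝ) + 2 ≤ x := by rw [hxx] at hx; exact hx
      have hJsub : Icc (x - ℓ) x ⊆ Ioi (N:ℝ) := by
        intro y hy
        simp only [mem_Ioi]
        have := hy.1
        linarith
      have hJint : φ * (volume (Icc (x - ℓ) x)).toReal ≤ ∫ y in Icc (x - ℓ) x, F y := by
        apply setIntegral_ge_of_const_le_real measurableSet_Icc (by simp)
        · intro y hy
          apply hφle
          rw [abs_sub_comm, abs_of_nonpos (by linarith [hy.2])]
          linarith [hy.1]
        · exact hfin.integrableOn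
      rw [Real.volume_Icc] at hJint
      have hvol : (ENNReal.ofReal (x - (x - ℓ))).toReal = ℓ := by
        rw [ENNReal.toReal_ofReal (by linarith)]
        ring
      rw [hvol] at hJint
      have hmono : ∫ y in Icc (x - ℓ) x, F y ≤ ∫ y in Ioi (N:ℝ), F y :=
        setIntegral_mono_set hfin.integrableOn
          (Eventually.of_forall fun y => hFnn y) (HasSubset.Subset.eventuallyLE hJsub)
      nlinarith
    · -- x ≤ 0, so x ≤ -(N+2)
      have hxN : x ≤ -((N:ℝ) + 2) := by rw [hxx] at hx; linarith
      have hJsub : Icc x (x + ℓ) ⊆ Iio (-(N:ℝ)) := by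
        intro y hy
        simp only [mem_Iio]
        have := hy.2
        linarith
      have hJint : φ * (volume (Icc x (x + ℓ))).toReal ≤ ∫ y in Icc x (x + ℓ), F y := by
        apply setIntegral_ge_of_const_le_real measurableSet_Icc (by simp)
        · intro y hy
          apply hφle
          rw [abs_of_nonpos (by linarith [hy.1])]
          linarith [hy.2]
        · exact hfin.integrableOn
      rw [Real.volume_Icc] at hJint
      have hvol : (ENNReal.ofReal (x + ℓ - x)).toReal = ℓ := by
        rw [ENNReal.toReal_ofReal (by linarith)]
        ring
      rw [hvol] at hJint
      have hmono : ∫ y in Icc x (x + ℓ), F y ≤ ∫ y in Iio (-(N:ℝ)), F y :=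
        setIntegral_mono_set hfin.integrableOn
          (Eventually.of_forall fun y => hFnn y) (HasSubset.Subset.eventuallyLE hJsub)
      nlinarith
  · -- S empty: everything is close
    refine ⟨0, le_refl 0, ?_⟩
    intro x _
    by_contra hcon
    push_neg at hcon
    exact hSne ⟨(g x, γ x), ⟨⟨hg x, hγb x⟩, by
      simp only [mem_setOf_eq]; linarith⟩⟩

/-- `μ` converges to the profile `γ̂` at spatial infinity,
uniformly in time: `lim_{|y|→∞} sup_{t∈[0,T]} |μ(t,y) − γ̂(y)| = 0`. -/
theorem uniform_convergence_to_profile_at_infinity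
    (T δ : ℝ) (hT : 0 < T) (hδ : 0 < δ) (hδ' : δ < 1/2)
    (μ H : ℝ → ℝ → ℝ)
    (hμreg : ContDiffOn ℝ (⊤ : ℕ∞) (fun p : ℝ × ℝ => μ p.1 p.2) (Set.Icc 0 T ×ˢ Set.univ))
    (hμbdd : ∀ t ∈ Set.Icc (0:ℝ) T, ∀ x : ℝ, μ t x ∈ Set.Icc δ (1 - δ))
    (hμder : ∀ k l : ℕ, ∃ C : ℝ, ∀ t ∈ Set.Icc (0:ℝ) T, ∀ x : ℝ,
      |iteratedDeriv l (fun s => iteratedDeriv k (fun y => μ s y) x) t| ≤ C)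
    (hHreg : ContDiff ℝ (⊤ : ℕ∞) (fun p : ℝ × ℝ => H p.1 p.2))
    (hHsupp : HasCompactSupport (fun p : ℝ × ℝ => H p.1 p.2))
    (hpde : ∀ t ∈ Set.Icc (0:ℝ) T, ∀ x : ℝ,
      deriv (fun s => μ s x) t
        = (1/2) * deriv (deriv (μ t)) x
            - deriv (fun y => H t y * (μ t y * (1 - μ t y))) x)
    (ρs ρS xs xS : ℝ) (hρs : 0 < ρs) (hρs' : ρs < 1) (hρS : 0 < ρS) (hρS' : ρS < 1)
    (hxs : xs ≤ xS)
    (γ : ℝ → ℝ) (hγreg : ContDiff ℝ (⊤ : ℕ∞) γ) (hγrange : ∀ x : ℝ, γ x ∈ Set.Ioo (0:ℝ) 1)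
    (hγleft : ∀ x : ℝ, x ≤ xs → γ x = ρs) (hγright : ∀ x : ℝ, xS ≤ x → γ x = ρS)
    (hfin : Integrable (fun x : ℝ => hd (μ 0 x) (γ x))) :
    ∀ ε > (0:ℝ), ∃ R : ℝ, ∀ y : ℝ, R ≤ |y| → ∀ t ∈ Set.Icc (0:ℝ) T,
      |μ t y - γ y| < ε := by
  intro ε hε
  have h0T : (0:ℝ) ∈ Icc (0:ℝ) T := ⟨le_refl 0, hT.le⟩
  -- slice regularity
  have hslice : ∀ t ∈ Icc (0:ℝ) T, ContDiff ℝ (⊤ : ℕ∞) (fun y => μ t y) := by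
    intro t ht
    rw [← contDiffOn_univ]
    exact hμreg.comp ((contDiff_const.prodMk contDiff_id).contDiffOn)
      (fun y _ => ⟨ht, mem_univ _⟩)
  have hμdiff : ∀ t ∈ Icc (0:ℝ) T, Differentiable ℝ (μ t) :=
    fun t ht => (hslice t ht).differentiable (by simp)
  have hμdiff2 : ∀ t ∈ Icc (0:ℝ) T, Differentiable ℝ (deriv (μ t)) := by
    intro t ht
    have h2 : ContDiff ℝ (⊤:ℕ∞) (μ t) := (hslice t ht).of_le (by simp)
    exact ((contDiff_infty_iff_deriv.mp h2).2).differentiable (by simp)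
  -- support radius of H
  obtain ⟨rH, hrH⟩ : ∃ r : ℝ, ∀ p ∈ tsupport (fun p : ℝ × ℝ => H p.1 p.2), ‖p‖ ≤ r := by
    obtain ⟨r, hr⟩ := (Metric.isBounded_iff_subset_closedBall 0).mp hHsupp.isBounded
    exact ⟨r, fun p hp => by simpa [Metric.mem_closedBall, dist_eq_norm] using hr hp⟩
  have hHzero : ∀ t x : ℝ, rH < |x| → H t x = 0 := by
    intro t x hx
    by_contra hne
    have hmem : ((t, x) : ℝ × ℝ) ∈ tsupport (fun p : ℝ × ℝ => H p.1 p.2) :=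
      subset_tsupport _ (by simpa using hne)
    have := hrH _ hmem
    have hn : |x| ≤ ‖((t, x) : ℝ × ℝ)‖ := by
      have := norm_snd_le ((t, x) : ℝ × ℝ)
      simpa using this
    linarith
  have hHderiv : ∀ t x : ℝ, rH + 1 ≤ |x| →
      deriv (fun y => H t y * (μ t y * (1 - μ t y))) x = 0 := by
    intro t x hx
    have hopen : IsOpen {y : ℝ | rH < |y|} := isOpen_lt continuous_const continuous_abs
    have hmem : x ∈ {y : ℝ | rH < |y|} := by simp only [mem_setOf_eq]; linarith
    have hEq : (fun y => H t y * (μ t y * (1 - μ t y))) =ᶠ[𝓝 x] (fun _ => 0) := by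
      filter_upwards [hopen.mem_nhds hmem] with y hy
      rw [hHzero t y hy, zero_mul]
    rw [hEq.deriv_eq, deriv_const]
  -- heat equation far out
  have heat : ∀ t ∈ Ioo (0:ℝ) T, ∀ x : ℝ, rH + 1 ≤ |x| →
      HasDerivAt (fun s => μ s x) ((1/2) * deriv (deriv (μ t)) x) t := by
    intro t ht x hx
    have hmem : (Icc (0:ℝ) T ×ˢ (univ : Set ℝ)) ∈ 𝓝 ((t, x) : ℝ × ℝ) :=
      prod_mem_nhds (Icc_mem_nhds ht.1 ht.2) univ_mem
    have hca : ContDiffAt ℝ (⊤ : ℕ∞) (fun p : ℝ × ℝ => μ p.1 p.2) (t, x) :=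
      hμreg.contDiffAt hmem
    have hdt : DifferentiableAt ℝ (fun s => μ s x) t := by
      have h1 : DifferentiableAt ℝ (fun s : ℝ => ((s, x) : ℝ × ℝ)) t :=
        differentiableAt_id.prodMk (differentiableAt_const x)
      exact (hca.differentiableAt (by simp)).comp t h1
    have h2 := hdt.hasDerivAt
    rw [hpde t ⟨ht.1.le, ht.2.le⟩ x, hHderiv t x hx, sub_zero] at h2
    exact h2
  -- bounds on γ
  obtain ⟨zm, hzmm, hzmin⟩ := isCompact_Icc.exists_isMinOn (nonempty_Icc.mpr hxs)
    hγreg.continuous.continuousOn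
  obtain ⟨zM, hzMm, hzmax⟩ := isCompact_Icc.exists_isMaxOn (nonempty_Icc.mpr hxs)
    hγreg.continuous.continuousOn
  set m : ℝ := min (γ zm) (min ρs ρS) with hm
  set M : ℝ := max (γ zM) (max ρs ρS) with hM
  have hm0 : 0 < m := lt_min (hγrange zm).1 (lt_min hρs hρS)
  have hM1 : M < 1 := max_lt (hγrange zM).2 (max_lt hρs' hρS')
  have hγmM : ∀ x : ℝ, γ x ∈ Icc m M := by
    intro x
    rcases le_total x xs with h | h
    · rw [hγleft x h]
      constructor
      · exact (min_le_right _ _).trans (min_le_left _ _)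
      · exact le_max_of_le_right (le_max_left _ _)
    · rcases le_total xS x with h' | h'
      · rw [hγright x h']
        constructor
        · exact (min_le_right _ _).trans (min_le_right _ _)
        · exact le_max_of_le_right (le_max_right _ _)
      · constructor
        · exact (min_le_left _ _).trans (hzmin ⟨h, h'⟩)
        · exact le_max_of_le_left (hzmax ⟨h, h'⟩)
  -- Lipschitz bound for μ 0 - γ
  obtain ⟨Cμ, hCμ⟩ := hμder 1 0
  have hCμ' : ∀ x : ℝ, |deriv (μ 0) x| ≤ Cμ := by
    intro x
    have := hCμ 0 h0T x
    simpa [iteratedDeriv_zero, iteratedDeriv_one] using this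
  have hγd_cont : Continuous (deriv γ) := by
    have h2 : ContDiff ℝ (⊤:ℕ∞) γ := hγreg.of_le (by simp)
    exact ((contDiff_infty_iff_deriv.mp h2).2).continuous
  obtain ⟨zd, hzdm, hzdmax⟩ := isCompact_Icc.exists_isMaxOn (nonempty_Icc.mpr hxs)
    (hγd_cont.abs.continuousOn (s := Icc xs xS))
  set Cγ : ℝ := |deriv γ zd| with hCγ
  have hCγ' : ∀ x : ℝ, |deriv γ x| ≤ Cγ := by
    intro x
    rcases lt_or_ge x xs with h | h
    · have : deriv γ x = 0 := by
        have hEq : γ =ᶠ[𝓝 x] (fun _ => ρs) := by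
          filter_upwards [Iio_mem_nhds h] with y hy
          exact hγleft y (le_of_lt hy)
        rw [hEq.deriv_eq, deriv_const]
      rw [this, abs_zero]
      exact abs_nonneg _
    · rcases le_or_gt x xS with h' | h'
      · exact hzdmax ⟨h, h'⟩
      · have : deriv γ x = 0 := by
          have hEq : γ =ᶠ[𝓝 x] (fun _ => ρS) := by
            filter_upwards [Ioi_mem_nhds h'] with y hy
            exact hγright y (le_of_lt hy)
          rw [hEq.deriv_eq, deriv_const]
        rw [this, abs_zero]
        exact abs_nonneg _
  set L : ℝ := Cμ + Cγ with hL
  have hL0 : 0 ≤ L := by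
    have h1 : 0 ≤ Cμ := le_trans (abs_nonneg _) (hCμ' 0)
    have h2 : 0 ≤ Cγ := abs_nonneg _
    linarith
  have hLip : ∀ x y : ℝ, |(μ 0 x - γ x) - (μ 0 y - γ y)| ≤ L * |x - y| := by
    intro x y
    set f : ℝ → ℝ := fun x => μ 0 x - γ x with hf
    have hfd : ∀ z ∈ (univ : Set ℝ), DifferentiableAt ℝ f z :=
      fun z _ => ((hμdiff 0 h0T) z).sub (hγreg.differentiable (by simp) z)
    have hbd : ∀ z ∈ (univ : Set ℝ), ‖deriv f z‖ ≤ L := by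
      intro z _
      have : deriv f z = deriv (μ 0) z - deriv γ z :=
        deriv_sub ((hμdiff 0 h0T) z) (hγreg.differentiable (by simp) z)
      rw [Real.norm_eq_abs, this]
      calc |deriv (μ 0) z - deriv γ z| ≤ |deriv (μ 0) z| + |deriv γ z| := abs_sub _ _
      _ ≤ Cμ + Cγ := add_le_add (hCμ' z) (hCγ' z)
    have := Convex.norm_image_sub_le_of_norm_deriv_le hfd hbd convex_univ
      (mem_univ y) (mem_univ x)
    simpa [Real.norm_eq_abs] using this
  -- step A
  obtain ⟨RA, hRA0, hRA⟩ := stepA hδ hδ' hm0 hM1 hL0 (fun x => hμbdd 0 h0T x) hγmM hLip hfin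
    (ε/4) (by linarith)
  -- the threshold
  set R1 : ℝ := max (max RA (rH + 1)) (max |xs| |xS|) with hR1
  have hR1RA : RA ≤ R1 := le_max_of_le_left (le_max_left _ _)
  have hR1rH : rH + 1 ≤ R1 := le_max_of_le_left (le_max_right _ _)
  have hR1xs : |xs| ≤ R1 := le_max_of_le_right (le_max_left _ _)
  have hR1xS : |xS| ≤ R1 := le_max_of_le_right (le_max_right _ _)
  have hR10 : 0 ≤ R1 := le_trans (abs_nonneg xs) hR1xs
  have hγR : ∀ x : ℝ, R1 ≤ x → γ x = ρS := fun x hx =>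
    hγright x (le_trans (le_trans (le_abs_self xS) hR1xS) hx)
  have hγL : ∀ x : ℝ, R1 ≤ x → γ (-x) = ρs := by
    intro x hx
    apply hγleft
    have : -xs ≤ |xs| := neg_le_abs xs
    linarith [le_trans hR1xs hx]
  have habs : ∀ x : ℝ, R1 ≤ x → rH + 1 ≤ |x| := by
    intro x hx
    rw [abs_of_nonneg (le_trans hR10 hx)]
    linarith [le_trans hR1rH hx]
  have habs' : ∀ x : ℝ, R1 ≤ x → rH + 1 ≤ |(-x)| := by
    intro x hx
    rw [abs_neg]
    exact habs x hx
  have hε4 : (0:ℝ) ≤ ε/4 := by linarith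
  -- initial closeness
  have hinit : ∀ x : ℝ, R1 ≤ x → |μ 0 x - ρS| ≤ ε/4 := by
    intro x hx
    have := hRA x (by rw [abs_of_nonneg (le_trans hR10 hx)]; linarith [le_trans hR1RA hx])
    rw [hγR x hx] at this
    linarith [this]
  have hinit' : ∀ x : ℝ, R1 ≤ x → |μ 0 (-x) - ρs| ≤ ε/4 := by
    intro x hx
    have h1 : RA ≤ |(-x)| := by
      rw [abs_neg, abs_of_nonneg (le_trans hR10 hx)]
      linarith [le_trans hR1RA hx]
    have := hRA (-x) h1
    rw [hγL x hx] at this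
    linarith [this]
  -- uniform bound |μ - ρ| ≤ 1
  have hbd1 : ∀ ρ : ℝ, 0 < ρ → ρ < 1 → ∀ t ∈ Icc (0:ℝ) T, ∀ x : ℝ, |μ t x - ρ| ≤ 1 := by
    intro ρ hρ hρ1 t ht x
    have := hμbdd t ht x
    rw [abs_le]
    constructor <;> [linarith [this.1]; linarith [this.2]]
  have hcontμ : ContinuousOn (fun p : ℝ × ℝ => μ p.1 p.2) (Icc 0 T ×ˢ univ) :=
    hμreg.continuousOn
  -- Application 1 : u = μ - ρS
  have bound1 : ∀ t ∈ Icc (0:ℝ) T, ∀ x, R1 ≤ x →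
      μ t x - ρS ≤ ε/4 + 3 * Real.exp (T/2) * Real.exp (R1 - x) := by
    apply maxprin hT hε4
    · exact hcontμ.sub continuousOn_const
    · intro t ht
      refine ⟨(hμdiff t ht).sub_const ρS, ?_⟩
      have e : deriv (fun y => μ t y - ρS) = deriv (μ t) :=
        funext fun y => deriv_sub_const ρS
      rw [e]
      exact hμdiff2 t ht
    · intro t ht x hx
      have e : deriv (fun y => μ t y - ρS) = deriv (μ t) :=
        funext fun y => deriv_sub_const ρS
      rw [e]
      exact (heat t ht x (habs x hx)).sub_const ρS
    · exact hbd1 ρS hρS hρS'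
    · exact hinit
  -- Application 2 : u = ρS - μ
  have bound2 : ∀ t ∈ Icc (0:ℝ) T, ∀ x, R1 ≤ x →
      ρS - μ t x ≤ ε/4 + 3 * Real.exp (T/2) * Real.exp (R1 - x) := by
    apply maxprin hT hε4
    · exact continuousOn_const.sub hcontμ
    · intro t ht
      refine ⟨(hμdiff t ht).const_sub ρS, ?_⟩
      have e : deriv (fun y => ρS - μ t y) = fun y => -deriv (μ t) y :=
        funext fun y => deriv_const_sub ρS
      rw [e]
      exact (hμdiff2 t ht).neg
    · intro t ht x hx
      have e : deriv (fun y => ρS - μ t y) = fun y => -deriv (μ t) y :=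
        funext fun y => deriv_const_sub ρS
      have e2 : deriv (deriv (fun y => ρS - μ t y)) x = -deriv (deriv (μ t)) x := by
        rw [e, deriv.fun_neg]
      have h := (heat t ht x (habs x hx)).const_sub ρS
      rw [e2]
      convert h using 1 <;> first | rfl | ring
    · intro t ht x
      rw [abs_sub_comm]
      exact hbd1 ρS hρS hρS' t ht x
    · intro x hx
      rw [abs_sub_comm]
      exact hinit x hx
  -- Application 3 : u = μ (-·) - ρs
  have bound3 : ∀ t ∈ Icc (0:ℝ) T, ∀ x, R1 ≤ x →
      μ t (-x) - ρs ≤ ε/4 + 3 * Real.exp (T/2) * Real.exp (R1 - x) := by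
    apply maxprin hT hε4
    · apply ContinuousOn.sub ?_ continuousOn_const
      apply hcontμ.comp ((continuous_fst.prodMk continuous_snd.neg).continuousOn)
      intro p hp
      exact ⟨hp.1, mem_univ _⟩
    · intro t ht
      refine ⟨((hμdiff t ht).comp differentiable_neg).sub_const ρs, ?_⟩
      have e : deriv (fun y => μ t (-y) - ρs) = fun y => -deriv (μ t) (-y) :=
        funext fun y => by rw [deriv_sub_const, deriv_comp_neg]
      rw [e]
      exact ((hμdiff2 t ht).comp differentiable_neg).neg
    · intro t ht x hx
      have e : deriv (fun y => μ t (-y) - ρs) = fun y => -deriv (μ t) (-y) :=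
        funext fun y => by rw [deriv_sub_const, deriv_comp_neg]
      have e2 : deriv (deriv (fun y => μ t (-y) - ρs)) x = deriv (deriv (μ t)) (-x) := by
        rw [e, deriv.fun_neg, deriv_comp_neg, neg_neg]
      rw [e2]
      exact (heat t ht (-x) (habs' x hx)).sub_const ρs
    · intro t ht x
      exact hbd1 ρs hρs hρs' t ht (-x)
    · exact hinit'
  -- Application 4 : u = ρs - μ (-·)
  have bound4 : ∀ t ∈ Icc (0:ℝ) T, ∀ x, R1 ≤ x →
      ρs - μ t (-x) ≤ ε/4 + 3 * Real.exp (T/2) * Real.exp (R1 - x) := by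
    apply maxprin hT hε4
    · apply ContinuousOn.sub continuousOn_const
      apply hcontμ.comp ((continuous_fst.prodMk continuous_snd.neg).continuousOn)
      intro p hp
      exact ⟨hp.1, mem_univ _⟩
    · intro t ht
      refine ⟨((hμdiff t ht).comp differentiable_neg).const_sub ρs, ?_⟩
      have e : deriv (fun y => ρs - μ t (-y)) = fun y => -(-deriv (μ t) (-y)) :=
        funext fun y => by rw [deriv_const_sub, deriv_comp_neg]
      rw [e]
      exact (((hμdiff2 t ht).comp differentiable_neg).neg).neg
    · intro t ht x hx
      have e : deriv (fun y => ρs - μ t (-y)) = fun y => -(-deriv (μ t) (-y)) :=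
        funext fun y => by rw [deriv_const_sub, deriv_comp_neg]
      have e2 : deriv (deriv (fun y => ρs - μ t (-y))) x = -(deriv (deriv (μ t)) (-x)) := by
        rw [e]
        simp only [neg_neg]
        rw [deriv_comp_neg]
      rw [e2]
      have h := (heat t ht (-x) (habs' x hx)).const_sub ρs
      convert h using 1 <;> first | rfl | ring
    · intro t ht x
      rw [abs_sub_comm]
      exact hbd1 ρs hρs hρs' t ht (-x)
    · intro x hx
      rw [abs_sub_comm]
      exact hinit' x hx
  -- tail estimate
  set D : ℝ := max 0 (T/2 + Real.log (12/ε) + 1) with hD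
  have htail : ∀ x : ℝ, R1 + D ≤ x →
      3 * Real.exp (T/2) * Real.exp (R1 - x) ≤ ε/4 := by
    intro x hx
    have hDg : T/2 + Real.log (12/ε) + 1 ≤ D := le_max_right _ _
    have h1 : R1 - x ≤ -(T/2 + Real.log (12/ε) + 1) := by linarith
    have h2 : Real.exp (R1 - x) ≤ Real.exp (-(T/2 + Real.log (12/ε) + 1)) :=
      Real.exp_le_exp.mpr h1
    have h3 : Real.exp (T/2) * Real.exp (-(T/2 + Real.log (12/ε) + 1))
        = (ε/12) * Real.exp (-1) := by
      rw [← Real.exp_add]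
      have he : T/2 + -(T/2 + Real.log (12/ε) + 1) = -Real.log (12/ε) + -1 := by ring
      rw [he, Real.exp_add, Real.exp_neg, Real.exp_log (by positivity)]
      have hi : (12/ε)⁻¹ = ε/12 := by
        field_simp
      rw [hi]
    have h4 : Real.exp (-1:ℝ) ≤ 1 := by
      rw [← Real.exp_zero]
      exact Real.exp_le_exp.mpr (by norm_num)
    calc 3 * Real.exp (T/2) * Real.exp (R1 - x)
        ≤ 3 * Real.exp (T/2) * Real.exp (-(T/2 + Real.log (12/ε) + 1)) := by
          exact mul_le_mul_of_nonneg_left h2 (by positivity)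
    _ = 3 * ((ε/12) * Real.exp (-1)) := by rw [mul_assoc, h3]
    _ ≤ 3 * ((ε/12) * 1) := by
          exact mul_le_mul_of_nonneg_left
            (mul_le_mul_of_nonneg_left h4 (by positivity)) (by norm_num)
    _ = ε/4 := by ring
  -- conclusion
  refine ⟨R1 + D, ?_⟩
  intro y hy t ht
  have hD0 : 0 ≤ D := le_max_left _ _
  rcases le_total 0 y with hy0 | hy0
  · have hyR : R1 + D ≤ y := by rwa [abs_of_nonneg hy0] at hy
    have hyR1 : R1 ≤ y := by linarith
    rw [hγR y hyR1]
    have b1 := bound1 t ht y hyR1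
    have b2 := bound2 t ht y hyR1
    have htl := htail y hyR
    rw [abs_lt]
    constructor <;> [linarith; linarith]
  · have hyR : R1 + D ≤ -y := by rwa [abs_of_nonpos hy0] at hy
    have hyR1 : R1 ≤ -y := by linarith
    have hyeq : μ t y = μ t (-(-y)) := by rw [neg_neg]
    have hyγ : γ y = ρs := by
      have := hγL (-y) hyR1
      rwa [neg_neg] at this
    rw [hyγ]
    have b3 := bound3 t ht (-y) hyR1
    have b4 := bound4 t ht (-y) hyR1
    rw [neg_neg] at b3 b4
    have htl := htail (-y) hyR
    rw [abs_lt]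
    constructor <;> [linarith; linarith]
end

section
/- Let μ, H be as in the context, and let 𝔍 : ℝ → ℝ be C² with compact support. Then for all 0 ≤ s ≤ t ≤ T: |∫_ℝ 𝔍(x)(μ(t,x) − μ(s,x)) dx| ≤ (t − s)·‖𝔍″‖_{L¹(ℝ)} + (∫₀ᵀ∫_ℝ H² μ(1−μ) dx du)^{1/2} · (t − s)^{1/2} · ‖𝔍′‖_{L²(ℝ)}. -/
open MeasureTheory Set



lemma my_integral_deriv_zero (h : ℝ → ℝ) (hh : ContDiff ℝ 1 h)
    (hsupp : HasCompactSupport h) : ∫ x : ℝ, deriv h x = 0 := by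
  have hcont : Continuous (deriv h) := hh.continuous_deriv le_rfl
  have hint : Integrable (deriv h) := hcont.integrable_of_hasCompactSupport hsupp.deriv
  have h1 := HasCompactSupport.integral_Iic_deriv_eq hh hsupp 0
  have h2 := HasCompactSupport.integral_Ioi_deriv_eq hh hsupp 0
  have h3 := intervalIntegral.integral_Iic_add_Ioi (b := (0:ℝ)) hint.integrableOn hint.integrableOn
  rw [h1, h2] at h3
  linarith

lemma my_ibp (f g : ℝ → ℝ) (hf : ContDiff ℝ 1 f) (hg : ContDiff ℝ 1 g)
    (hsupp : HasCompactSupport f) :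
    ∫ x : ℝ, f x * deriv g x = - ∫ x : ℝ, deriv f x * g x := by
  have hfg : HasCompactSupport (fun x => f x * g x) := hsupp.mul_right
  have int1 : Integrable (fun x => deriv f x * g x) :=
    ((hf.continuous_deriv le_rfl).mul hg.continuous).integrable_of_hasCompactSupport
      (hsupp.deriv.mul_right)
  have int2 : Integrable (fun x => f x * deriv g x) :=
    (hf.continuous.mul (hg.continuous_deriv le_rfl)).integrable_of_hasCompactSupport
      (hsupp.mul_right)
  have h0 : ∫ x : ℝ, deriv (fun y => f y * g y) x = 0 :=
    my_integral_deriv_zero _ (hf.mul hg) hfg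
  have hd : (fun x => deriv (fun y => f y * g y) x)
      = fun x => deriv f x * g x + f x * deriv g x := by
    funext x
    exact ((hf.differentiable one_ne_zero x).hasDerivAt.mul
      (hg.differentiable one_ne_zero x).hasDerivAt).deriv
  rw [hd, integral_add int1 int2] at h0
  linarith

/-- Lebesgue measure on the space-time strip `(0,T] × ℝ`. -/
noncomputable def spaceTime (T : ℝ) : Measure (ℝ × ℝ) :=
  (volume.restrict (Set.Ioc (0:ℝ) T)).prod volume

set_option maxHeartbeats 1000000 in
/-- uniform time-continuity estimate for finite-rate densities
tested against a `C²` compactly supported function `𝔍`: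
`|∫ 𝔍 (μ_t − μ_s)| ≤ (t−s)‖𝔍″‖_{L¹} + (∫₀ᵀ∫ H²μ(1−μ))^{1/2} (t−s)^{1/2} ‖𝔍′‖_{L²}`. -/
theorem time_continuity_estimate
    (T δ : ℝ) (hT : 0 < T) (hδ : 0 < δ) (hδ' : δ < 1/2)
    (μ H : ℝ → ℝ → ℝ)
    (hμreg : ContDiffOn ℝ (⊤ : ℕ∞) (fun p : ℝ × ℝ => μ p.1 p.2) (Set.Icc 0 T ×ˢ Set.univ))
    (hμbdd : ∀ t ∈ Set.Icc (0:ℝ) T, ∀ x : ℝ, μ t x ∈ Set.Icc δ (1 - δ))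
    (hμder : ∀ k l : ℕ, ∃ C : ℝ, ∀ t ∈ Set.Icc (0:ℝ) T, ∀ x : ℝ,
      |iteratedDeriv l (fun s => iteratedDeriv k (fun y => μ s y) x) t| ≤ C)
    (hHreg : ContDiff ℝ (⊤ : ℕ∞) (fun p : ℝ × ℝ => H p.1 p.2))
    (hHsupp : HasCompactSupport (fun p : ℝ × ℝ => H p.1 p.2))
    (hpde : ∀ t ∈ Set.Icc (0:ℝ) T, ∀ x : ℝ,
      deriv (fun s => μ s x) t
        = (1/2) * deriv (deriv (μ t)) x
            - deriv (fun y => H t y * (μ t y * (1 - μ t y))) x)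
    (𝔍 : ℝ → ℝ) (h𝔍reg : ContDiff ℝ 2 𝔍) (h𝔍supp : HasCompactSupport 𝔍) :
    ∀ s t : ℝ, 0 ≤ s → s ≤ t → t ≤ T →
      |∫ x : ℝ, 𝔍 x * (μ t x - μ s x)|
        ≤ (t - s) * (∫ x : ℝ, |deriv (deriv 𝔍) x|)
          + Real.sqrt (∫ p : ℝ × ℝ, H p.1 p.2 ^ 2 * (μ p.1 p.2 * (1 - μ p.1 p.2))
                ∂(spaceTime T))
            * Real.sqrt (t - s) * Real.sqrt (∫ x : ℝ, (deriv 𝔍 x) ^ 2) := by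
  intro s t hs hst htT
  -- basic notation
  set F : ℝ × ℝ → ℝ := fun p => μ p.1 p.2 with hF
  set Hf : ℝ × ℝ → ℝ := fun p => H p.1 p.2 with hHf
  set J1 : ℝ → ℝ := deriv 𝔍 with hJ1
  set J2 : ℝ → ℝ := deriv (deriv 𝔍) with hJ2
  -- regularity of 𝔍 and its derivatives
  have h𝔍d : ContDiff ℝ 1 (deriv 𝔍) := by
    have : ContDiff ℝ ((1:ℕ)+1) 𝔍 := by exact_mod_cast h𝔍reg
    exact ((contDiff_succ_iff_deriv (n := 1)).mp this).2.2
  have hJ1c : Continuous J1 := h𝔍d.continuous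
  have hJ2c : Continuous J2 := h𝔍d.continuous_deriv le_rfl
  have hJ1supp : HasCompactSupport J1 := h𝔍supp.deriv
  have hJ2supp : HasCompactSupport J2 := hJ1supp.deriv
  have int𝔍 : Integrable 𝔍 := h𝔍reg.continuous.integrable_of_hasCompactSupport h𝔍supp
  have intJ1 : Integrable J1 := hJ1c.integrable_of_hasCompactSupport hJ1supp
  have intJ2 : Integrable J2 := hJ2c.integrable_of_hasCompactSupport hJ2supp
  have intJ1sq : Integrable (fun x => J1 x ^ 2) :=
    (hJ1c.mul hJ1c).integrable_of_hasCompactSupport (by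
      simpa [sq] using hJ1supp.mul_right) |>.congr (by
        filter_upwards with x; simp only [Pi.mul_apply]; ring)
  -- bound on H
  obtain ⟨CH, hCH⟩ := hHsupp.exists_bound_of_continuous hHreg.continuous
  have hCH' : ∀ u x : ℝ, |H u x| ≤ CH := fun u x => by
    simpa [hHf, Real.norm_eq_abs] using hCH (u, x)
  -- bound on time derivative of μ
  obtain ⟨C1, hC1⟩ := hμder 0 1
  have hC1' : ∀ u ∈ Icc (0:ℝ) T, ∀ x : ℝ, |deriv (fun r => μ r x) u| ≤ C1 := by
    intro u hu x
    have := hC1 u hu x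
    simpa [iteratedDeriv_zero, iteratedDeriv_one] using this
  -- bounds on μ
  have h01 : ∀ u ∈ Icc (0:ℝ) T, ∀ x : ℝ, 0 ≤ μ u x ∧ μ u x ≤ 1 := by
    intro u hu x
    obtain ⟨ha, hb⟩ := hμbdd u hu x
    constructor <;> nlinarith
  have hmm : ∀ u ∈ Icc (0:ℝ) T, ∀ x : ℝ,
      0 ≤ μ u x * (1 - μ u x) ∧ μ u x * (1 - μ u x) ≤ 1 := by
    intro u hu x
    obtain ⟨ha, hb⟩ := h01 u hu x
    constructor <;> nlinarith

  -- slice regularity of μ in x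
  have hslice : ∀ u ∈ Icc (0:ℝ) T, ContDiff ℝ (⊤ : ℕ∞) (μ u) := by
    intro u hu
    have hg : ContDiff ℝ (⊤ : ℕ∞) (fun y : ℝ => ((u, y) : ℝ × ℝ)) := contDiff_const.prodMk contDiff_id
    have h2 : ContDiffOn ℝ (⊤ : ℕ∞) (F ∘ fun y : ℝ => (u, y)) univ :=
      hμreg.comp (hg.contDiffOn : ContDiffOn ℝ (⊤ : ℕ∞) _ univ) (fun y _ => ⟨hu, mem_univ _⟩)
    rw [contDiffOn_univ] at h2
    exact h2
  -- slice regularity and compact support of H in x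
  have hHslice : ∀ u : ℝ, ContDiff ℝ (⊤ : ℕ∞) (H u) := by
    intro u
    have hg : ContDiff ℝ (⊤ : ℕ∞) (fun y : ℝ => ((u, y) : ℝ × ℝ)) := contDiff_const.prodMk contDiff_id
    exact hHreg.comp hg
  have hHslicesupp : ∀ u : ℝ, HasCompactSupport (H u) := by
    intro u
    have hK : IsCompact (Prod.snd '' tsupport Hf) := hHsupp.image continuous_snd
    apply IsCompact.of_isClosed_subset hK isClosed_closure
    apply closure_minimal _ hK.isClosed
    intro x hx
    exact ⟨(u, x), subset_tsupport Hf hx, rfl⟩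

  -- the "partial t" derivative, continuous version
  set S : Set (ℝ × ℝ) := Ioo 0 T ×ˢ (univ : Set ℝ) with hS
  have hSopen : IsOpen S := isOpen_Ioo.prod isOpen_univ
  have hSsub : S ⊆ Icc 0 T ×ˢ (univ : Set ℝ) :=
    prod_mono_left Ioo_subset_Icc_self
  set Dc : ℝ × ℝ → ℝ := fun p => fderiv ℝ F p (1, 0) with hDc_def
  have hDc : ∀ p ∈ S, HasDerivAt (fun r => μ r p.2) (Dc p) p.1 := by
    rintro ⟨u, x⟩ hp
    have hnb : Icc 0 T ×ˢ (univ : Set ℝ) ∈ nhds ((u, x) : ℝ × ℝ) :=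
      Filter.mem_of_superset (hSopen.mem_nhds hp) hSsub
    have hca : ContDiffAt ℝ (⊤ : ℕ∞) F (u, x) := hμreg.contDiffAt hnb
    have hdF : HasFDerivAt F (fderiv ℝ F (u, x)) (u, x) :=
      (hca.differentiableAt (by simp)).hasFDerivAt
    have hc : HasDerivAt (fun r : ℝ => ((r, x) : ℝ × ℝ)) (1, 0) u :=
      (hasDerivAt_id u).prodMk (hasDerivAt_const u x)
    exact hdF.comp_hasDerivAt u hc
  have hDeq : ∀ p ∈ S, deriv (fun r => μ r p.2) p.1 = Dc p :=
    fun p hp => (hDc p hp).deriv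
  have hDcont : ContinuousOn Dc S := by
    have h1 : ContinuousOn (fderiv ℝ F) S :=
      (hμreg.mono hSsub).continuousOn_fderiv_of_isOpen hSopen (by simp)
    exact (ContinuousLinearMap.apply ℝ ℝ ((1:ℝ), (0:ℝ))).continuous.comp_continuousOn h1
  -- FTC in time, for each fixed x
  have hIccsub : Icc s t ⊆ Icc (0:ℝ) T := Icc_subset_Icc hs htT
  have hIoosub : Ioo s t ⊆ Ioo (0:ℝ) T := Ioo_subset_Ioo hs htT
  have hIocsub : Ioc s t ⊆ Icc (0:ℝ) T := fun u hu => ⟨hs.trans hu.1.le, hu.2.trans htT⟩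
  have hFTC : ∀ x : ℝ, μ t x - μ s x = ∫ u in Ioc s t, deriv (fun r => μ r x) u := by
    intro x
    have hcont : ContinuousOn (fun r => μ r x) (Icc s t) := by
      have : ContinuousOn (F ∘ fun r : ℝ => ((r, x) : ℝ × ℝ)) (Icc s t) :=
        hμreg.continuousOn.comp (Continuous.continuousOn (by fun_prop))
          (fun r hr => ⟨hIccsub hr, mem_univ _⟩)
      exact this
    have hderiv : ∀ u ∈ Ioo s t,
        HasDerivWithinAt (fun r => μ r x) (deriv (fun r => μ r x) u) (Ioi u) u := by
      intro u hu
      have h := hDc (u, x) ⟨hIoosub hu, mem_univ _⟩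
      rw [hDeq (u, x) ⟨hIoosub hu, mem_univ _⟩]
      exact h.hasDerivWithinAt
    have hint : IntervalIntegrable (fun u => deriv (fun r => μ r x) u) volume s t := by
      rw [intervalIntegrable_iff_integrableOn_Ioc_of_le hst]
      apply Integrable.mono' (g := fun _ => C1)
      · exact integrableOn_const measure_Ioc_lt_top.ne
      · exact (measurable_deriv _).aestronglyMeasurable.restrict
      · filter_upwards [ae_restrict_mem measurableSet_Ioc] with u hu
        simpa [Real.norm_eq_abs] using hC1' u (hIocsub hu) x
    have := intervalIntegral.integral_eq_sub_of_hasDeriv_right_of_le hst hcont hderiv hint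
    rw [intervalIntegral.integral_of_le hst] at this
    linarith

  -- the product measure on (s,t) × ℝ
  set π : Measure (ℝ × ℝ) := (volume.restrict (Ioo s t)).prod volume with hπ_def
  have hπ : π = (volume.prod volume).restrict (Ioo s t ×ˢ (univ : Set ℝ)) := by
    rw [hπ_def, ← Measure.prod_restrict, Measure.restrict_univ]
  have haeπ : ∀ᵐ p ∂π, p ∈ Ioo s t ×ˢ (univ : Set ℝ) := by
    rw [hπ]
    exact ae_restrict_mem (measurableSet_Ioo.prod MeasurableSet.univ)
  have hsubS : Ioo s t ×ˢ (univ : Set ℝ) ⊆ S := prod_mono_left hIoosub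
  have hsubIcc : Ioo s t ×ˢ (univ : Set ℝ) ⊆ Icc 0 T ×ˢ (univ : Set ℝ) :=
    prod_mono_left fun u hu => ⟨hs.trans hu.1.le, hu.2.le.trans htT⟩
  have hconst_int : ∀ c : ℝ, Integrable (fun _ : ℝ => c) (volume.restrict (Ioo s t)) :=
    fun c => integrableOn_const measure_Ioo_lt_top.ne
  -- integrability of the "time-derivative" integrand on the product
  set G : ℝ × ℝ → ℝ := fun p => 𝔍 p.2 * Dc p with hG_def
  have hGint : Integrable G π := by
    apply Integrable.mono' (g := fun p : ℝ × ℝ => C1 * |𝔍 p.2|)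
    · simpa using (hconst_int C1).mul_prod int𝔍.abs
    · rw [hπ]
      exact (((h𝔍reg.continuous.comp continuous_snd).continuousOn.mul
        (hDcont.mono hsubS)).aestronglyMeasurable
        (measurableSet_Ioo.prod MeasurableSet.univ))
    · filter_upwards [haeπ] with p hp
      have h1 : |Dc p| ≤ C1 := by
        rw [← hDeq p (hsubS hp)]
        exact hC1' p.1 ⟨hs.trans hp.1.1.le, hp.1.2.le.trans htT⟩ p.2
      have h2 : 0 ≤ |𝔍 p.2| := abs_nonneg _
      calc ‖G p‖ = |𝔍 p.2| * |Dc p| := by rw [hG_def]; exact abs_mul _ _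
        _ ≤ |𝔍 p.2| * C1 := by nlinarith
        _ = C1 * |𝔍 p.2| := mul_comm _ _
  have hGD : (Function.uncurry fun u x => 𝔍 x * deriv (fun r => μ r x) u) =ᵐ[π] G := by
    filter_upwards [haeπ] with p hp
    show 𝔍 p.2 * deriv (fun r => μ r p.2) p.1 = 𝔍 p.2 * Dc p
    rw [hDeq p (hsubS hp)]
  have hintD : Integrable (Function.uncurry fun u x => 𝔍 x * deriv (fun r => μ r x) u) π :=
    hGint.congr hGD.symm
  -- Step 1: Fubini
  have key1 : ∫ x : ℝ, 𝔍 x * (μ t x - μ s x)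
      = ∫ u in Ioo s t, ∫ x : ℝ, 𝔍 x * deriv (fun r => μ r x) u := by
    have e1 : ∀ x : ℝ, 𝔍 x * (μ t x - μ s x)
        = ∫ u in Ioo s t, 𝔍 x * deriv (fun r => μ r x) u := by
      intro x
      rw [hFTC x, integral_Ioc_eq_integral_Ioo, ← integral_const_mul]
    rw [integral_congr_ae (Filter.Eventually.of_forall e1)]
    exact (integral_integral_swap hintD).symm

  -- Step 2: PDE + integration by parts, for each u in (s,t)
  have key2 : ∀ u ∈ Ioo s t,
      ∫ x : ℝ, 𝔍 x * deriv (fun r => μ r x) u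
        = (∫ x : ℝ, (1/2 : ℝ) * (J2 x * μ u x))
          + ∫ x : ℝ, J1 x * (H u x * (μ u x * (1 - μ u x))) := by
    intro u hu
    have huI : u ∈ Icc (0:ℝ) T := hIocsub ⟨hu.1, hu.2.le⟩
    have hm : ContDiff ℝ (⊤ : ℕ∞) (μ u) := hslice u huI
    have hq : ContDiff ℝ (⊤ : ℕ∞) (fun y => H u y * (μ u y * (1 - μ u y))) :=
      (hHslice u).mul (hm.mul (contDiff_const.sub hm))
    have hinfle : (1 : WithTop ℕ∞) ≤ ((⊤ : ℕ∞) : WithTop ℕ∞) := by exact_mod_cast le_top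
    have hm2 : ContDiff ℝ ((⊤ : ℕ∞) : WithTop ℕ∞) (μ u) := hm.of_le (by simp)
    have hq2 : ContDiff ℝ ((⊤ : ℕ∞) : WithTop ℕ∞) (fun y => H u y * (μ u y * (1 - μ u y))) := hq.of_le (by simp)
    have hm' : ContDiff ℝ 1 (deriv (μ u)) := ((contDiff_infty_iff_deriv.mp hm2).2).of_le hinfle
    have hm''c : Continuous (deriv (deriv (μ u))) := hm'.continuous_deriv le_rfl
    have hq'c : Continuous (deriv (fun y => H u y * (μ u y * (1 - μ u y)))) :=
      ((contDiff_infty_iff_deriv.mp hq2).2).continuous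
    have ibp1 : ∫ x : ℝ, 𝔍 x * deriv (deriv (μ u)) x = ∫ x : ℝ, J2 x * μ u x := by
      calc ∫ x : ℝ, 𝔍 x * deriv (deriv (μ u)) x
          = - ∫ x : ℝ, deriv 𝔍 x * deriv (μ u) x :=
            my_ibp 𝔍 (deriv (μ u)) (h𝔍reg.of_le (by norm_num)) hm' h𝔍supp
        _ = - - ∫ x : ℝ, deriv (deriv 𝔍) x * μ u x := by
            rw [my_ibp (deriv 𝔍) (μ u) h𝔍d (hm2.of_le hinfle) hJ1supp]
        _ = ∫ x : ℝ, J2 x * μ u x := neg_neg _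
    have ibp2 : ∫ x : ℝ, 𝔍 x * deriv (fun y => H u y * (μ u y * (1 - μ u y))) x
        = - ∫ x : ℝ, J1 x * (H u x * (μ u x * (1 - μ u x))) :=
      my_ibp 𝔍 _ (h𝔍reg.of_le (by norm_num)) (hq2.of_le hinfle) h𝔍supp
    have e2 : ∀ x : ℝ, 𝔍 x * deriv (fun r => μ r x) u
        = (1/2 : ℝ) * (𝔍 x * deriv (deriv (μ u)) x)
          - 𝔍 x * deriv (fun y => H u y * (μ u y * (1 - μ u y))) x := by
      intro x
      rw [hpde u huI x]
      ring
    have intB : Integrable (fun x : ℝ => 𝔍 x * deriv (deriv (μ u)) x) :=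
      (h𝔍reg.continuous.mul hm''c).integrable_of_hasCompactSupport h𝔍supp.mul_right
    have intC : Integrable
        (fun x : ℝ => 𝔍 x * deriv (fun y => H u y * (μ u y * (1 - μ u y))) x) :=
      (h𝔍reg.continuous.mul hq'c).integrable_of_hasCompactSupport h𝔍supp.mul_right
    rw [integral_congr_ae (Filter.Eventually.of_forall e2),
      integral_sub (intB.const_mul _) intC, integral_const_mul, ibp1, ibp2,
      integral_const_mul]
    ring

  -- the two integrands on the product space
  set W1 : ℝ × ℝ → ℝ := fun p => (1/2 : ℝ) * (J2 p.2 * μ p.1 p.2) with hW1_def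
  set W2 : ℝ × ℝ → ℝ := fun p => J1 p.2 * (H p.1 p.2 * (μ p.1 p.2 * (1 - μ p.1 p.2)))
    with hW2_def
  have haesm : ∀ W : ℝ × ℝ → ℝ, ContinuousOn W (Icc 0 T ×ˢ (univ : Set ℝ)) →
      AEStronglyMeasurable W π := by
    intro W hW
    rw [hπ]
    exact (hW.mono hsubIcc).aestronglyMeasurable (measurableSet_Ioo.prod MeasurableSet.univ)
  have hμcont : ContinuousOn (fun p : ℝ × ℝ => μ p.1 p.2) (Icc 0 T ×ˢ (univ : Set ℝ)) :=
    hμreg.continuousOn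
  have hmmcont : ContinuousOn (fun p : ℝ × ℝ => μ p.1 p.2 * (1 - μ p.1 p.2))
      (Icc 0 T ×ˢ (univ : Set ℝ)) := hμcont.mul (continuousOn_const.sub hμcont)
  have hmemIcc : ∀ p : ℝ × ℝ, p ∈ Ioo s t ×ˢ (univ : Set ℝ) → p.1 ∈ Icc (0:ℝ) T :=
    fun p hp => ⟨hs.trans hp.1.1.le, hp.1.2.le.trans htT⟩
  have hW1int : Integrable W1 π := by
    apply Integrable.mono' (g := fun p : ℝ × ℝ => |J2 p.2|)
    · simpa using (hconst_int 1).mul_prod intJ2.abs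
    · exact haesm W1 (continuousOn_const.mul
        (((hJ2c.comp continuous_snd).continuousOn).mul hμcont))
    · filter_upwards [haeπ] with p hp
      obtain ⟨h0, h1⟩ := h01 p.1 (hmemIcc p hp) p.2
      rw [hW1_def, Real.norm_eq_abs, abs_mul, abs_mul]
      have hj := abs_nonneg (J2 p.2)
      rw [abs_of_nonneg h0]
      have h12 : |(1/2 : ℝ)| = 1/2 := by norm_num
      rw [h12]
      nlinarith
  have hW2int : Integrable W2 π := by
    apply Integrable.mono' (g := fun p : ℝ × ℝ => CH * |J1 p.2|)
    · exact (hconst_int CH).mul_prod intJ1.abs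
    · exact haesm W2 (((hJ1c.comp continuous_snd).continuousOn).mul
        ((hHreg.continuous.comp continuous_id).continuousOn.mul hmmcont))
    · filter_upwards [haeπ] with p hp
      obtain ⟨h0, h1⟩ := hmm p.1 (hmemIcc p hp) p.2
      have hH := hCH' p.1 p.2
      have habs := abs_nonneg (H p.1 p.2)
      rw [hW2_def, Real.norm_eq_abs, abs_mul, abs_mul]
      rw [abs_of_nonneg h0]
      have e1 : |H p.1 p.2| * (μ p.1 p.2 * (1 - μ p.1 p.2)) ≤ CH * 1 :=
        mul_le_mul hH h1 h0 (habs.trans hH)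
      nlinarith [abs_nonneg (J1 p.2), mul_nonneg habs h0]
  -- Step 3: split into the two product integrals
  have key3 : ∫ x : ℝ, 𝔍 x * (μ t x - μ s x) = (∫ p, W1 p ∂π) + ∫ p, W2 p ∂π := by
    rw [key1, setIntegral_congr_fun measurableSet_Ioo (fun u hu => key2 u hu)]
    rw [integral_add ((hW1int.integral_prod_left : _)) ((hW2int.integral_prod_left : _))]
    congr 1
    · have := integral_integral (f := fun u x => W1 (u, x)) hW1int
      simpa using this
    · have := integral_integral (f := fun u x => W2 (u, x)) hW2int
      simpa using this

  -- constant-in-time integrals over the product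
  have hvol : (volume (Ioo s t)).toReal = t - s := by
    rw [Real.volume_Ioo, ENNReal.toReal_ofReal (sub_nonneg.2 hst)]
  have hsnd_int : ∀ g : ℝ → ℝ, Integrable g volume →
      Integrable (fun p : ℝ × ℝ => g p.2) π := by
    intro g hg
    simpa using (hconst_int 1).mul_prod hg
  have hsnd_val : ∀ g : ℝ → ℝ, Integrable g volume →
      ∫ p, g p.2 ∂π = (t - s) * ∫ x : ℝ, g x := by
    intro g hg
    have h1 := integral_integral (f := fun (_ : ℝ) x => g x) (hsnd_int g hg)
    rw [← h1, integral_const, measureReal_restrict_apply_univ, measureReal_def, hvol, smul_eq_mul]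
  -- first bound
  have bound1 : |∫ p, W1 p ∂π| ≤ (t - s) * ∫ x : ℝ, |J2 x| := by
    calc |∫ p, W1 p ∂π| = ‖∫ p, W1 p ∂π‖ := (Real.norm_eq_abs _).symm
      _ ≤ ∫ p, ‖W1 p‖ ∂π := norm_integral_le_integral_norm _
      _ ≤ ∫ p, |J2 p.2| ∂π := by
          refine integral_mono_ae hW1int.norm (hsnd_int _ intJ2.abs) ?_
          filter_upwards [haeπ] with p hp
          obtain ⟨h0, h1⟩ := h01 p.1 (hmemIcc p hp) p.2
          have hj := abs_nonneg (J2 p.2)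
          rw [hW1_def, Real.norm_eq_abs, abs_mul, abs_mul, abs_of_nonneg h0]
          have h12 : |(1/2 : ℝ)| = 1/2 := by norm_num
          rw [h12]
          nlinarith
      _ = (t - s) * ∫ x : ℝ, |J2 x| := hsnd_val _ intJ2.abs
  -- Cauchy–Schwarz setup
  set f2 : ℝ × ℝ → ℝ := fun p => J1 p.2 * Real.sqrt (μ p.1 p.2 * (1 - μ p.1 p.2)) with hf2_def
  set g2 : ℝ × ℝ → ℝ := fun p => H p.1 p.2 * Real.sqrt (μ p.1 p.2 * (1 - μ p.1 p.2)) with hg2_def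
  have hsqrtcont : ContinuousOn (fun p : ℝ × ℝ => Real.sqrt (μ p.1 p.2 * (1 - μ p.1 p.2)))
      (Icc 0 T ×ˢ (univ : Set ℝ)) := Real.continuous_sqrt.comp_continuousOn hmmcont
  have hf2cont : ContinuousOn f2 (Icc 0 T ×ˢ (univ : Set ℝ)) :=
    ((hJ1c.comp continuous_snd).continuousOn).mul hsqrtcont
  have hg2cont : ContinuousOn g2 (Icc 0 T ×ˢ (univ : Set ℝ)) :=
    (hHreg.continuous.continuousOn).mul hsqrtcont
  have hf2sq_int : Integrable (fun p => f2 p ^ 2) π := by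
    apply Integrable.mono' (g := fun p : ℝ × ℝ => J1 p.2 ^ 2)
    · simpa using (hconst_int 1).mul_prod intJ1sq
    · exact haesm _ (hf2cont.pow 2)
    · filter_upwards [haeπ] with p hp
      obtain ⟨h0, h1⟩ := hmm p.1 (hmemIcc p hp) p.2
      have he : f2 p ^ 2 = J1 p.2 ^ 2 * (μ p.1 p.2 * (1 - μ p.1 p.2)) := by
        rw [hf2_def, mul_pow, Real.sq_sqrt h0]
      rw [Real.norm_eq_abs, abs_of_nonneg (sq_nonneg _), he]
      nlinarith [sq_nonneg (J1 p.2)]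
  have hHfπ : Integrable Hf π := by
    rw [hπ]
    have hHg : Integrable Hf (volume.prod volume) := by
      rw [← Measure.volume_eq_prod]
      exact hHreg.continuous.integrable_of_hasCompactSupport hHsupp
    exact hHg.restrict
  have hg2sq_int : Integrable (fun p => g2 p ^ 2) π := by
    apply Integrable.mono' (g := fun p : ℝ × ℝ => CH * |Hf p|)
    · exact hHfπ.abs.const_mul CH
    · exact haesm _ (hg2cont.pow 2)
    · filter_upwards [haeπ] with p hp
      obtain ⟨h0, h1⟩ := hmm p.1 (hmemIcc p hp) p.2
      have he : g2 p ^ 2 = H p.1 p.2 ^ 2 * (μ p.1 p.2 * (1 - μ p.1 p.2)) := by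
        rw [hg2_def, mul_pow, Real.sq_sqrt h0]
      rw [Real.norm_eq_abs, abs_of_nonneg (sq_nonneg _), he]
      have hH := hCH' p.1 p.2
      have habs := abs_nonneg (H p.1 p.2)
      have hHf2 : |Hf p| = |H p.1 p.2| := rfl
      rw [hHf2]
      nlinarith [sq_abs (H p.1 p.2), sq_nonneg (H p.1 p.2)]
  have h2e : ENNReal.ofReal (2 : ℝ) = 2 := by
    rw [ENNReal.ofReal_ofNat]
  have hf2mem : MemLp f2 (ENNReal.ofReal (2:ℝ)) π := by
    rw [h2e]
    exact (memLp_two_iff_integrable_sq (haesm f2 hf2cont)).2 hf2sq_int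
  have hg2mem : MemLp g2 (ENNReal.ofReal (2:ℝ)) π := by
    rw [h2e]
    exact (memLp_two_iff_integrable_sq (haesm g2 hg2cont)).2 hg2sq_int
  have hpq : Real.HolderConjugate 2 2 := Real.HolderConjugate.two_two
  have cs := integral_mul_norm_le_Lp_mul_Lq hpq hf2mem hg2mem
  have hnorm2 : ∀ h : ℝ × ℝ → ℝ, (fun p => ‖h p‖ ^ (2:ℝ)) = fun p => h p ^ 2 := by
    intro h
    funext p
    rw [Real.norm_eq_abs, show (2:ℝ) = ((2:ℕ):ℝ) by norm_num, Real.rpow_natCast, sq_abs]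
  rw [hnorm2 f2, hnorm2 g2] at cs
  have habs_eq : ∀ᵐ p ∂π, ‖W2 p‖ = ‖f2 p‖ * ‖g2 p‖ := by
    filter_upwards [haeπ] with p hp
    obtain ⟨hμ0, hμ1⟩ := h01 p.1 (hmemIcc p hp) p.2
    have h0 : 0 ≤ μ p.1 p.2 * (1 - μ p.1 p.2) := mul_nonneg hμ0 (by linarith)
    have hs0 : Real.sqrt (μ p.1 p.2 * (1 - μ p.1 p.2)) * Real.sqrt (μ p.1 p.2 * (1 - μ p.1 p.2))
        = μ p.1 p.2 * (1 - μ p.1 p.2) := Real.mul_self_sqrt h0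
    rw [Real.norm_eq_abs, Real.norm_eq_abs, Real.norm_eq_abs, hW2_def, hf2_def, hg2_def,
      abs_mul, abs_mul, abs_mul, abs_mul, abs_mul, abs_of_nonneg hμ0,
      abs_of_nonneg (show (0:ℝ) ≤ 1 - μ p.1 p.2 by linarith),
      abs_of_nonneg (Real.sqrt_nonneg (μ p.1 p.2 * (1 - μ p.1 p.2)))]
    linear_combination (-(|J1 p.2| * |H p.1 p.2|)) * hs0
  have cs2 : |∫ p, W2 p ∂π|
      ≤ (∫ p, f2 p ^ 2 ∂π) ^ (1/2:ℝ) * (∫ p, g2 p ^ 2 ∂π) ^ (1/2:ℝ) := by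
    calc |∫ p, W2 p ∂π| = ‖∫ p, W2 p ∂π‖ := (Real.norm_eq_abs _).symm
      _ ≤ ∫ p, ‖W2 p‖ ∂π := norm_integral_le_integral_norm _
      _ = ∫ p, ‖f2 p‖ * ‖g2 p‖ ∂π := integral_congr_ae habs_eq
      _ ≤ _ := cs

  -- bound the f2 square integral
  have hf2sq_bound : ∫ p, f2 p ^ 2 ∂π ≤ (t - s) * ∫ x : ℝ, J1 x ^ 2 := by
    calc ∫ p, f2 p ^ 2 ∂π ≤ ∫ p, J1 p.2 ^ 2 ∂π := by
          refine integral_mono_ae hf2sq_int (hsnd_int _ intJ1sq) ?_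
          filter_upwards [haeπ] with p hp
          obtain ⟨h0, h1⟩ := hmm p.1 (hmemIcc p hp) p.2
          have he : f2 p ^ 2 = J1 p.2 ^ 2 * (μ p.1 p.2 * (1 - μ p.1 p.2)) := by
            rw [hf2_def, mul_pow, Real.sq_sqrt h0]
          rw [he]
          nlinarith [sq_nonneg (J1 p.2)]
      _ = (t - s) * ∫ x : ℝ, J1 x ^ 2 := hsnd_val _ intJ1sq
  -- bound the g2 square integral by the space-time integral
  have hST : spaceTime T = (volume.prod volume).restrict (Ioc 0 T ×ˢ (univ : Set ℝ)) := by
    rw [spaceTime, ← Measure.prod_restrict, Measure.restrict_univ]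
  have hsub2 : Ioo s t ×ˢ (univ : Set ℝ) ⊆ Ioc 0 T ×ˢ (univ : Set ℝ) :=
    prod_mono_left (fun u hu => ⟨lt_of_le_of_lt hs hu.1, hu.2.le.trans htT⟩)
  have hπST : π = (spaceTime T).restrict (Ioo s t ×ˢ (univ : Set ℝ)) := by
    rw [hST, Measure.restrict_restrict (measurableSet_Ioo.prod MeasurableSet.univ),
      inter_eq_self_of_subset_left hsub2]
    exact hπ
  have hle : π ≤ spaceTime T := hπST ▸ Measure.restrict_le_self
  have haeST : ∀ᵐ p ∂(spaceTime T), p ∈ Ioc 0 T ×ˢ (univ : Set ℝ) := by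
    rw [hST]
    exact ae_restrict_mem (measurableSet_Ioc.prod MeasurableSet.univ)
  have hmemIcc' : ∀ p : ℝ × ℝ, p ∈ Ioc 0 T ×ˢ (univ : Set ℝ) → p.1 ∈ Icc (0:ℝ) T :=
    fun p hp => ⟨hp.1.1.le, hp.1.2⟩
  have hnonnegST : 0 ≤ᵐ[spaceTime T]
      fun p : ℝ × ℝ => H p.1 p.2 ^ 2 * (μ p.1 p.2 * (1 - μ p.1 p.2)) := by
    filter_upwards [haeST] with p hp
    exact mul_nonneg (sq_nonneg _) (hmm p.1 (hmemIcc' p hp) p.2).1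
  have hintST : Integrable (fun p : ℝ × ℝ => H p.1 p.2 ^ 2 * (μ p.1 p.2 * (1 - μ p.1 p.2)))
      (spaceTime T) := by
    have hHST : Integrable Hf (spaceTime T) := by
      rw [hST]
      have hHg : Integrable Hf (volume.prod volume) := by
        rw [← Measure.volume_eq_prod]
        exact hHreg.continuous.integrable_of_hasCompactSupport hHsupp
      exact hHg.restrict
    apply Integrable.mono' (g := fun p : ℝ × ℝ => CH * |Hf p|)
    · exact hHST.abs.const_mul CH
    · rw [hST]
      exact ((((hHreg.continuous.pow 2).continuousOn).mul hmmcont).mono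
        (prod_mono_left Ioc_subset_Icc_self)).aestronglyMeasurable
        (measurableSet_Ioc.prod MeasurableSet.univ)
    · filter_upwards [haeST] with p hp
      obtain ⟨h0, h1⟩ := hmm p.1 (hmemIcc' p hp) p.2
      have hH := hCH' p.1 p.2
      have habs := abs_nonneg (H p.1 p.2)
      have hHf2 : |Hf p| = |H p.1 p.2| := rfl
      rw [Real.norm_eq_abs, abs_of_nonneg (mul_nonneg (sq_nonneg _) h0), hHf2]
      nlinarith [sq_abs (H p.1 p.2), sq_nonneg (H p.1 p.2)]
  have hg2sq_bound : ∫ p, g2 p ^ 2 ∂π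
      ≤ ∫ p : ℝ × ℝ, H p.1 p.2 ^ 2 * (μ p.1 p.2 * (1 - μ p.1 p.2)) ∂(spaceTime T) := by
    have heq : ∫ p, g2 p ^ 2 ∂π
        = ∫ p : ℝ × ℝ, H p.1 p.2 ^ 2 * (μ p.1 p.2 * (1 - μ p.1 p.2)) ∂π := by
      refine integral_congr_ae ?_
      filter_upwards [haeπ] with p hp
      obtain ⟨h0, h1⟩ := hmm p.1 (hmemIcc p hp) p.2
      rw [hg2_def, mul_pow, Real.sq_sqrt h0]
    rw [heq]
    exact integral_mono_measure hle hnonnegST hintST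
  -- put everything together
  have h12r : ∀ a : ℝ, 0 ≤ a → a ^ (1/2 : ℝ) = Real.sqrt a :=
    fun a _ => (Real.sqrt_eq_rpow a).symm
  have hf2i0 : 0 ≤ ∫ p, f2 p ^ 2 ∂π := integral_nonneg fun p => sq_nonneg _
  have hg2i0 : 0 ≤ ∫ p, g2 p ^ 2 ∂π := integral_nonneg fun p => sq_nonneg _
  have bound2 : |∫ p, W2 p ∂π|
      ≤ Real.sqrt (∫ p : ℝ × ℝ, H p.1 p.2 ^ 2 * (μ p.1 p.2 * (1 - μ p.1 p.2)) ∂(spaceTime T))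
        * Real.sqrt (t - s) * Real.sqrt (∫ x : ℝ, J1 x ^ 2) := by
    calc |∫ p, W2 p ∂π|
        ≤ (∫ p, f2 p ^ 2 ∂π) ^ (1/2:ℝ) * (∫ p, g2 p ^ 2 ∂π) ^ (1/2:ℝ) := cs2
      _ = Real.sqrt (∫ p, f2 p ^ 2 ∂π) * Real.sqrt (∫ p, g2 p ^ 2 ∂π) := by
          rw [h12r _ hf2i0, h12r _ hg2i0]
      _ ≤ Real.sqrt ((t - s) * ∫ x : ℝ, J1 x ^ 2)
            * Real.sqrt (∫ p : ℝ × ℝ, H p.1 p.2 ^ 2 * (μ p.1 p.2 * (1 - μ p.1 p.2))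
                ∂(spaceTime T)) :=
          mul_le_mul (Real.sqrt_le_sqrt hf2sq_bound) (Real.sqrt_le_sqrt hg2sq_bound)
            (Real.sqrt_nonneg _) (Real.sqrt_nonneg _)
      _ = _ := by
          rw [Real.sqrt_mul (sub_nonneg.2 hst)]
          ring
  rw [key3]
  calc |(∫ p, W1 p ∂π) + ∫ p, W2 p ∂π| ≤ |∫ p, W1 p ∂π| + |∫ p, W2 p ∂π| := abs_add_le _ _
    _ ≤ (t - s) * (∫ x : ℝ, |J2 x|)
        + Real.sqrt (∫ p : ℝ × ℝ, H p.1 p.2 ^ 2 * (μ p.1 p.2 * (1 - μ p.1 p.2)) ∂(spaceTime T))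
          * Real.sqrt (t - s) * Real.sqrt (∫ x : ℝ, J1 x ^ 2) := add_le_add bound1 bound2
end

section
/- Let ω ≠ 0 and b ∈ ℝ. Over all continuously differentiable f : [0,1] → ℝ with f(0) = 0 and f(1) = b, the infimum of ∫₀¹ [ (1/2) f′(t)² + (ω⁴/8) f(t)² ] dt equals (b² ω²/4) · (e^{ω²/2} + e^{−ω²/2})/(e^{ω²/2} − e^{−ω²/2}), and this infimum is attained at f(t) = b·(e^{t ω²/2} − e^{−t ω²/2})/(e^{ω²/2} − e^{−ω²/2}). -/
/-! With `c = ω²/2` the integrand is `½ (f'² + c² f²)`, and `ψ = minF ω b` solves the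
Euler–Lagrange equation `ψ'' = c² ψ` with `ψ 0 = 0`, `ψ 1 = b`. For any admissible `f`, write
`f = ψ + g` with `g 0 = g 1 = 0`: since `(ψ' g)' = ψ' g' + c² ψ g`, the cross term integrates
to zero, so `E f = E ψ + E g ≥ E ψ`. The same integration by parts gives
`E ψ = ½ ψ'(1) ψ(1) = (b² c / 2) coth c`. -/

open MeasureTheory Set intervalIntegral

/-- The action functional `E(f) = ∫₀¹ ((1/2) f′(t)² + (ω⁴/8) f(t)²) dt`. -/
noncomputable def actionE (ω : ℝ) (f : ℝ → ℝ) : ℝ :=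
  ∫ t in (0:ℝ)..1, ((1/2) * (deriv f t) ^ 2 + ω ^ 4 / 8 * (f t) ^ 2)

/-- The claimed minimal value. -/
noncomputable def minV (ω b : ℝ) : ℝ :=
  b ^ 2 * ω ^ 2 / 4 *
    ((Real.exp (ω ^ 2 / 2) + Real.exp (-(ω ^ 2) / 2)) /
      (Real.exp (ω ^ 2 / 2) - Real.exp (-(ω ^ 2) / 2)))

/-- The claimed minimizer. -/
noncomputable def minF (ω b : ℝ) (t : ℝ) : ℝ :=
  b * ((Real.exp (t * ω ^ 2 / 2) - Real.exp (-(t * ω ^ 2) / 2)) /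
    (Real.exp (ω ^ 2 / 2) - Real.exp (-(ω ^ 2) / 2)))

lemma intervalIntegral.integral_congr_Ioo {f g : ℝ → ℝ} {a b : ℝ} (hab : a ≤ b)
    (h : EqOn f g (Ioo a b)) : ∫ t in a..b, f t = ∫ t in a..b, g t := by
  rw [integral_of_le hab, integral_of_le hab, integral_Ioc_eq_integral_Ioo,
    integral_Ioc_eq_integral_Ioo, setIntegral_congr_fun measurableSet_Ioo h]

lemma ContDiffOn.hasDerivAt_derivWithin_Icc {f : ℝ → ℝ} {a b t : ℝ}
    (hf : ContDiffOn ℝ 1 f (Icc a b)) (ht : t ∈ Ioo a b) :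
    HasDerivAt f (derivWithin f (Icc a b) t) t := by
  have hnhds : Icc a b ∈ nhds t := Icc_mem_nhds ht.1 ht.2
  rw [derivWithin_of_mem_nhds hnhds]
  exact ((hf.differentiableOn one_ne_zero).differentiableAt hnhds).hasDerivAt

section DirichletPrinciple

variable {a b k : ℝ} {ψ ψ' f f' : ℝ → ℝ}

lemma integral_mul_add_mul_eq_of_hasDerivAt (hab : a ≤ b)
    (hψ : ∀ t, HasDerivAt ψ (ψ' t) t) (hψ' : ∀ t, HasDerivAt ψ' (k * ψ t) t)
    (hf : ContinuousOn f (Icc a b)) (hf' : ContinuousOn f' (Icc a b))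
    (hderiv : ∀ t ∈ Ioo a b, HasDerivAt f (f' t) t) :
    ∫ t in a..b, (ψ' t * f' t + k * ψ t * f t) = ψ' b * f b - ψ' a * f a := by
  have hψc : Continuous ψ := Differentiable.continuous fun t => (hψ t).differentiableAt
  have hψ'c : Continuous ψ' := Differentiable.continuous fun t => (hψ' t).differentiableAt
  refine integral_eq_sub_of_hasDerivAt_of_le hab (by fun_prop)
    (fun t ht => ((hψ' t).mul (hderiv t ht)).congr_deriv (by ring)) ?_
  exact ContinuousOn.intervalIntegrable_of_Icc hab (by fun_prop)

lemma integral_sq_add_mul_sq_eq_of_hasDerivAt (hab : a ≤ b)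
    (hψ : ∀ t, HasDerivAt ψ (ψ' t) t) (hψ' : ∀ t, HasDerivAt ψ' (k * ψ t) t) :
    ∫ t in a..b, (ψ' t ^ 2 + k * ψ t ^ 2) = ψ' b * ψ b - ψ' a * ψ a := by
  have hψc : Continuous ψ := Differentiable.continuous fun t => (hψ t).differentiableAt
  have hψ'c : Continuous ψ' := Differentiable.continuous fun t => (hψ' t).differentiableAt
  rw [← integral_mul_add_mul_eq_of_hasDerivAt hab hψ hψ' hψc.continuousOn hψ'c.continuousOn
    fun t _ => hψ t]
  congr 1 with t
  ring

lemma integral_sq_add_mul_sq_le_of_hasDerivAt (hk : 0 ≤ k) (hab : a ≤ b)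
    (hψ : ∀ t, HasDerivAt ψ (ψ' t) t) (hψ' : ∀ t, HasDerivAt ψ' (k * ψ t) t)
    (hf : ContinuousOn f (Icc a b)) (hf' : ContinuousOn f' (Icc a b))
    (hderiv : ∀ t ∈ Ioo a b, HasDerivAt f (f' t) t) (ha : f a = ψ a) (hb : f b = ψ b) :
    ∫ t in a..b, (ψ' t ^ 2 + k * ψ t ^ 2) ≤ ∫ t in a..b, (f' t ^ 2 + k * f t ^ 2) := by
  have hψc : Continuous ψ := Differentiable.continuous fun t => (hψ t).differentiableAt
  have hψ'c : Continuous ψ' := Differentiable.continuous fun t => (hψ' t).differentiableAt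
  set g := f - ψ
  set g' := f' - ψ'
  have hg : ContinuousOn g (Icc a b) := hf.sub hψc.continuousOn
  have hg' : ContinuousOn g' (Icc a b) := hf'.sub hψ'c.continuousOn
  have hcross : ∫ t in a..b, (ψ' t * g' t + k * ψ t * g t) = 0 := by
    rw [integral_mul_add_mul_eq_of_hasDerivAt hab hψ hψ' hg hg'
      fun t ht => (hderiv t ht).sub (hψ t)]
    simp [g, ha, hb]
  have hgnonneg : 0 ≤ ∫ t in a..b, (g' t ^ 2 + k * g t ^ 2) :=
    integral_nonneg hab fun t _ => by positivity
  have hint {F : ℝ → ℝ} (hF : ContinuousOn F (Icc a b)) : IntervalIntegrable F volume a b :=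
    hF.intervalIntegrable_of_Icc hab
  calc ∫ t in a..b, (ψ' t ^ 2 + k * ψ t ^ 2)
      ≤ (∫ t in a..b, (ψ' t ^ 2 + k * ψ t ^ 2))
          + 2 * (∫ t in a..b, (ψ' t * g' t + k * ψ t * g t))
          + ∫ t in a..b, (g' t ^ 2 + k * g t ^ 2) := by rw [hcross]; linarith
    _ = ∫ t in a..b, (f' t ^ 2 + k * f t ^ 2) := by
      rw [← intervalIntegral.integral_const_mul, ← integral_add (hint (by fun_prop))
        (hint (by fun_prop)), ← integral_add (hint (by fun_prop)) (hint (by fun_prop))]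
      congr 1 with t
      simp only [g, g', Pi.sub_apply]
      ring

end DirichletPrinciple

open Real

lemma hasDerivAt_const_mul_sinh_mul (A c t : ℝ) :
    HasDerivAt (fun t => A * sinh (c * t)) (A * c * cosh (c * t)) t :=
  (((hasDerivAt_id t).const_mul c).sinh.const_mul A).congr_deriv (by simp; ring)

lemma hasDerivAt_const_mul_cosh_mul (A c t : ℝ) :
    HasDerivAt (fun t => A * c * cosh (c * t)) (c ^ 2 * (A * sinh (c * t))) t :=
  (((hasDerivAt_id t).const_mul c).cosh.const_mul (A * c)).congr_deriv (by simp; ring)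

lemma exp_sub_exp_neg (x : ℝ) : exp x - exp (-x) = 2 * sinh x := by
  rw [sinh_eq]; ring

lemma exp_add_exp_neg (x : ℝ) : exp x + exp (-x) = 2 * cosh x := by
  rw [cosh_eq]; ring

lemma minF_eq_sinh (ω b : ℝ) :
    minF ω b = fun t => b / sinh (ω ^ 2 / 2) * sinh (ω ^ 2 / 2 * t) := by
  ext t
  simp only [minF, neg_div, exp_sub_exp_neg]
  ring_nf

lemma minV_eq_cosh_div_sinh (ω b : ℝ) :
    minV ω b = b ^ 2 * ω ^ 2 / 4 * (cosh (ω ^ 2 / 2) / sinh (ω ^ 2 / 2)) := by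
  simp only [minV, neg_div, exp_sub_exp_neg, exp_add_exp_neg]
  ring_nf

lemma hasDerivAt_minF (ω b t : ℝ) :
    HasDerivAt (minF ω b) (b / sinh (ω ^ 2 / 2) * (ω ^ 2 / 2) * cosh (ω ^ 2 / 2 * t)) t := by
  rw [minF_eq_sinh]
  exact hasDerivAt_const_mul_sinh_mul _ _ t

lemma hasDerivAt_deriv_minF (ω b t : ℝ) :
    HasDerivAt (deriv (minF ω b)) ((ω ^ 2 / 2) ^ 2 * minF ω b t) t := by
  rw [funext fun t => (hasDerivAt_minF ω b t).deriv, minF_eq_sinh]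
  exact hasDerivAt_const_mul_cosh_mul _ _ t

lemma sinh_sq_div_two_ne_zero {ω : ℝ} (hω : ω ≠ 0) : sinh (ω ^ 2 / 2) ≠ 0 :=
  (sinh_pos_iff.2 (by positivity)).ne'

lemma minF_zero (ω b : ℝ) : minF ω b 0 = 0 := by
  simp [minF]

lemma minF_one {ω : ℝ} (hω : ω ≠ 0) (b : ℝ) : minF ω b 1 = b := by
  simp [minF_eq_sinh, sinh_sq_div_two_ne_zero hω]

lemma actionE_eq_of_eqOn {ω : ℝ} {f f' : ℝ → ℝ} (h : EqOn (deriv f) f' (Ioo 0 1)) :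
    actionE ω f = 1 / 2 * ∫ t in (0:ℝ)..1, (f' t ^ 2 + (ω ^ 2 / 2) ^ 2 * f t ^ 2) := by
  rw [actionE, ← intervalIntegral.integral_const_mul]
  refine integral_congr_Ioo zero_le_one fun t ht => ?_
  simp only [h ht]
  ring

lemma actionE_minF {ω : ℝ} (hω : ω ≠ 0) (b : ℝ) : actionE ω (minF ω b) = minV ω b := by
  rw [actionE_eq_of_eqOn fun _ _ => rfl, integral_sq_add_mul_sq_eq_of_hasDerivAt zero_le_one
      (fun t => (hasDerivAt_minF ω b t).differentiableAt.hasDerivAt) (hasDerivAt_deriv_minF ω b),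
    (hasDerivAt_minF ω b 1).deriv, minF_zero, minF_one hω, minV_eq_cosh_div_sinh]
  field_simp [sinh_sq_div_two_ne_zero hω]
  ring

lemma minV_le_actionE {ω : ℝ} (hω : ω ≠ 0) {b : ℝ} {f : ℝ → ℝ}
    (hf : ContDiffOn ℝ 1 f (Icc 0 1)) (h0 : f 0 = 0) (h1 : f 1 = b) :
    minV ω b ≤ actionE ω f := by
  have hderiv (t : ℝ) (ht : t ∈ Ioo 0 1) := hf.hasDerivAt_derivWithin_Icc ht
  rw [← actionE_minF hω, actionE_eq_of_eqOn fun _ _ => rfl,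
    actionE_eq_of_eqOn fun t ht => (hderiv t ht).deriv]
  gcongr
  refine integral_sq_add_mul_sq_le_of_hasDerivAt (sq_nonneg _) zero_le_one
    (fun t => (hasDerivAt_minF ω b t).differentiableAt.hasDerivAt) (hasDerivAt_deriv_minF ω b)
    hf.continuousOn (hf.continuousOn_derivWithin (uniqueDiffOn_Icc one_pos) le_rfl) hderiv
    (by rw [h0, minF_zero]) (by rw [h1, minF_one hω])

/-- over continuously differentiable `f : [0,1] → ℝ` with
`f(0) = 0`, `f(1) = b`, the infimum of
`∫₀¹ ((1/2) f′² + (ω⁴/8) f²)` equals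
`(b²ω²/4)·(e^{ω²/2}+e^{−ω²/2})/(e^{ω²/2}−e^{−ω²/2})`,
attained at `f(t) = b (e^{tω²/2} − e^{−tω²/2})/(e^{ω²/2} − e^{−ω²/2})`. -/
theorem action_inf_attained (ω b : ℝ) (hω : ω ≠ 0) :
    (∀ f : ℝ → ℝ, ContDiffOn ℝ 1 f (Set.Icc 0 1) → f 0 = 0 → f 1 = b →
        minV ω b ≤ actionE ω f) ∧
    ContDiffOn ℝ 1 (minF ω b) (Set.Icc 0 1) ∧ minF ω b 0 = 0 ∧ minF ω b 1 = b ∧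
    actionE ω (minF ω b) = minV ω b :=
  ⟨fun _ hf h0 h1 => minV_le_actionE hω hf h0 h1, by rw [minF_eq_sinh]; fun_prop,
    minF_zero ω b, minF_one hω b, actionE_minF hω b⟩
end

section
/- The integral of (1 − e^{−y²})/y² over the real line equals 2√π: ∫_ℝ (1 − e^{−y²})/y² dy = 2√π. -/
/-! The integrand is even, and on `(0, ∞)` it equals `F' + 2 exp (-y²)` for
`F y = (exp (-y²) - 1) / y`. `F` tends to `0` at `∞` and is continuous at `0` with value `0`
(it is the difference quotient of `exp (-y²)` at `0`, whose derivative there is `0`), so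
`∫₀^∞ (1 - exp (-y²)) / y² = 2 ∫₀^∞ exp (-y²) = √π`. -/

open MeasureTheory Real Set Filter Topology

theorem integral_eq_two_smul_integral_Ioi_of_even {E : Type*} [NormedAddCommGroup E]
    [NormedSpace ℝ E] {f : ℝ → E} (hf : Integrable f) (heven : ∀ x, f (-x) = f x) :
    ∫ x, f x = (2 : ℝ) • ∫ x in Ioi 0, f x := by
  have hIic : ∫ x in Iic 0, f x = ∫ x in Ioi 0, f x := by
    simpa only [heven, neg_zero] using integral_comp_neg_Iic (0 : ℝ) f
  rw [← intervalIntegral.integral_Iic_add_Ioi hf.integrableOn hf.integrableOn, hIic, two_smul]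

theorem one_sub_exp_neg_div_nonneg {t : ℝ} (ht : 0 ≤ t) : 0 ≤ (1 - exp (-t)) / t :=
  div_nonneg (sub_nonneg.mpr (exp_le_one_iff.mpr (neg_nonpos.mpr ht))) ht

theorem one_sub_exp_neg_div_le {t : ℝ} (ht : 0 ≤ t) : (1 - exp (-t)) / t ≤ 2 / (1 + t) := by
  rcases ht.eq_or_lt with rfl | ht
  · simp
  have hle_t : 1 - exp (-t) ≤ t := by linarith [add_one_le_exp (-t)]
  have hle_one : 1 - exp (-t) ≤ 1 := by linarith [exp_pos (-t)]
  rw [div_le_div_iff₀ ht (by positivity)]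
  nlinarith

theorem integrable_one_sub_exp_neg_sq_div_sq :
    Integrable fun y : ℝ ↦ (1 - exp (-y ^ 2)) / y ^ 2 := by
  refine (integrable_inv_one_add_sq.const_mul 2).mono'
    (by fun_prop : Measurable fun y : ℝ ↦ (1 - exp (-y ^ 2)) / y ^ 2).aestronglyMeasurable
    (Eventually.of_forall fun y ↦ ?_)
  rw [norm_of_nonneg (one_sub_exp_neg_div_nonneg (sq_nonneg y)), ← div_eq_mul_inv]
  exact one_sub_exp_neg_div_le (sq_nonneg y)

theorem continuousAt_exp_neg_sq_sub_one_div :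
    ContinuousAt (fun y : ℝ ↦ (exp (-y ^ 2) - 1) / y) 0 := by
  have hderiv : HasDerivAt (fun y : ℝ ↦ exp (-y ^ 2)) 0 0 := by
    simpa using ((hasDerivAt_pow 2 (0 : ℝ)).fun_neg).exp
  have hslope : slope (fun y : ℝ ↦ exp (-y ^ 2)) 0 = fun y ↦ (exp (-y ^ 2) - 1) / y := by
    ext y
    simp [slope_def_field]
  rw [← continuousWithinAt_compl_self, ContinuousWithinAt, ← hslope]
  simpa using hasDerivAt_iff_tendsto_slope.mp hderiv

theorem tendsto_exp_neg_sq_sub_one_div_atTop :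
    Tendsto (fun y : ℝ ↦ (exp (-y ^ 2) - 1) / y) atTop (𝓝 0) := by
  have hexp : Tendsto (fun y : ℝ ↦ exp (-y ^ 2) - 1) atTop (𝓝 (0 - 1)) :=
    (tendsto_exp_atBot.comp (tendsto_neg_atBot_iff.mpr (tendsto_pow_atTop two_ne_zero))).sub_const 1
  simpa only [mul_zero, div_eq_mul_inv] using hexp.mul tendsto_inv_atTop_zero

theorem hasDerivAt_exp_neg_sq_sub_one_div {y : ℝ} (hy : y ≠ 0) :
    HasDerivAt (fun y : ℝ ↦ (exp (-y ^ 2) - 1) / y)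
      ((1 - exp (-y ^ 2)) / y ^ 2 - 2 * exp (-y ^ 2)) y := by
  have h := ((((hasDerivAt_pow 2 y).fun_neg).exp).sub_const 1).fun_div (hasDerivAt_id' y) hy
  refine h.congr_deriv ?_
  field_simp
  ring

theorem integral_Ioi_one_sub_exp_neg_sq_div_sq :
    ∫ y in Ioi (0 : ℝ), (1 - exp (-y ^ 2)) / y ^ 2 = √π := by
  have hgauss : Integrable fun y : ℝ ↦ 2 * exp (-y ^ 2) := by
    simpa using (integrable_exp_neg_mul_sq one_pos).const_mul 2
  have hFTC : ∫ y in Ioi (0 : ℝ), ((1 - exp (-y ^ 2)) / y ^ 2 - 2 * exp (-y ^ 2)) = 0 := by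
    simpa using integral_Ioi_of_hasDerivAt_of_tendsto
      continuousAt_exp_neg_sq_sub_one_div.continuousWithinAt
      (fun y hy ↦ hasDerivAt_exp_neg_sq_sub_one_div (ne_of_gt hy))
      (integrable_one_sub_exp_neg_sq_div_sq.sub hgauss).integrableOn
      tendsto_exp_neg_sq_sub_one_div_atTop
  rw [integral_sub integrable_one_sub_exp_neg_sq_div_sq.integrableOn hgauss.integrableOn,
    sub_eq_zero, integral_const_mul] at hFTC
  have h := integral_gaussian_Ioi 1
  simp only [neg_mul, one_mul, div_one] at h
  rw [hFTC, h, mul_div_cancel₀ _ two_ne_zero]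

/-- `∫_ℝ (1 − e^{−y²})/y² dy = 2√π`.
(At `y = 0` the Lean expression evaluates to `0/0 = 0`; this single point is
Lebesgue-negligible, so the integral agrees with the continuous extension.) -/
theorem integral_one_sub_exp_neg_sq_div_sq :
    ∫ y : ℝ, (1 - Real.exp (-y ^ 2)) / y ^ 2 = 2 * Real.sqrt π := by
  rw [integral_eq_two_smul_integral_Ioi_of_even integrable_one_sub_exp_neg_sq_div_sq
    (fun y ↦ by rw [neg_sq]), integral_Ioi_one_sub_exp_neg_sq_div_sq, smul_eq_mul]
end
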